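/- arXiv:1903.10809 — 6 statements merged into one kernel-verified Lean document; each statement's English description precedes it below -/
import Mathlib

section
/- Let m_1 and m_2 be multiset partitions of {1^k,1'^k} of rank at most n. Then T_{m_1} ∘ T_{m_2} = Σ_m α_m T_m, where the sum ranges over multiset partitions m of {1^k,1'^k} of rank at most n, and where for any choice of a, c ∈ M(n,k) with E(a,c) = m one has α_m = |{b ∈ M(n,k) : E(a,b) = m_2 and E(b,c) = m_1}|; in particular, this cardinality depends only on m and not on the choice of the pair (a,c). -/
/-- `M(n,k)`: the set of `n`-tuples of non-negative integers summing to `k`. -/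
abbrev Mnk (n k : ℕ) : Type := {a : Fin n → ℕ // ∑ i, a i = k}

instance (n k : ℕ) : Fintype (Mnk n k) :=
  Fintype.subtype (Finset.Nat.antidiagonalTuple n k) fun _ =>
    Finset.Nat.mem_antidiagonalTuple

/-- The action of a permutation `w ∈ S_n` on `M(n,k)`: `(w • a)_i = a_{w⁻¹(i)}`. -/
def permA {n k : ℕ} (w : Equiv.Perm (Fin n)) (a : Mnk n k) : Mnk n k :=
  ⟨fun i => a.1 (w⁻¹ i), (Equiv.sum_comp w⁻¹ a.1).trans a.2⟩

/-- `E(a,b)`: the multiset `{(a_1,b_1),…,(a_n,b_n)}` with all copies of `(0,0)` removed. -/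
def Epairs {n k : ℕ} (a b : Mnk n k) : Multiset (ℕ × ℕ) :=
  (Multiset.map (fun i => (a.1 i, b.1 i)) Finset.univ.val).filter fun p => p ≠ (0, 0)

/-- A multiset partition of `{1^k, 1'^k}`, encoded as a multiset of pairs `(p,q)` of
non-negative integers, each pair `≠ (0,0)`, with first coordinates summing to `k` and
second coordinates summing to `k`. -/
def IsMSP (k : ℕ) (m : Multiset (ℕ × ℕ)) : Prop :=
  (0, 0) ∉ m ∧ (m.map Prod.fst).sum = k ∧ (m.map Prod.snd).sum = k

/-- The integral operator `T_m` on `F[M(n,k)]`, determined by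
`T_m(1_a) = Σ_{b : E(a,b) = m} 1_b`. -/
def Tm (F : Type) [Field F] (n k : ℕ) (m : Multiset (ℕ × ℕ)) :
    Module.End F (Mnk n k → F) where
  toFun f b := ∑ a : Mnk n k, if Epairs a b = m then f a else 0
  map_add' f g := by
    funext b
    simp only [Pi.add_apply]
    rw [← Finset.sum_add_distrib]
    refine Finset.sum_congr rfl fun a _ => ?_
    by_cases h : Epairs a b = m <;> simp [h]
  map_smul' c f := by
    funext b
    simp only [RingHom.id_apply, Pi.smul_apply, smul_eq_mul]
    rw [Finset.mul_sum]
    refine Finset.sum_congr rfl fun a _ => ?_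
    by_cases h : Epairs a b = m <;> simp [h]


lemma exists_perm_of_map_eq {α : Type*} {n : ℕ} {f g : Fin n → α}
    (h : Multiset.map f Finset.univ.val = Multiset.map g Finset.univ.val) :
    ∃ σ : Equiv.Perm (Fin n), f = g ∘ σ := by
  classical
  have hcard : ∀ x : α, Fintype.card {i // f i = x} = Fintype.card {i // g i = x} := by
    intro x
    have h0 := congrArg (Multiset.count x) h
    rw [Multiset.count_map, Multiset.count_map] at h0
    simp only [Fintype.card_subtype]
    have h1 : (Finset.univ.filter fun i => f i = x).card
        = Multiset.card (Finset.univ.val.filter fun i => x = f i) := by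
      simp [Finset.card, Finset.filter, eq_comm]
    have h2 : (Finset.univ.filter fun i => g i = x).card
        = Multiset.card (Finset.univ.val.filter fun i => x = g i) := by
      simp [Finset.card, Finset.filter, eq_comm]
    rw [h1, h2, h0]
  let e : ∀ x : α, {i // f i = x} ≃ {i // g i = x} := fun x => Fintype.equivOfCardEq (hcard x)
  exact ⟨Equiv.ofFiberEquiv e, funext fun i => (Equiv.ofFiberEquiv_map e i).symm⟩

lemma Epairs_permA {n k : ℕ} (w : Equiv.Perm (Fin n)) (a b : Mnk n k) :
    Epairs (permA w a) (permA w b) = Epairs a b := by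
  unfold Epairs permA
  congr 1
  calc Multiset.map (fun i => (a.1 (w⁻¹ i), b.1 (w⁻¹ i))) Finset.univ.val
      = Multiset.map ((fun i => (a.1 i, b.1 i)) ∘ ⇑w⁻¹) Finset.univ.val := rfl
    _ = Multiset.map (fun i => (a.1 i, b.1 i)) (Multiset.map ⇑w⁻¹ Finset.univ.val) :=
        (Multiset.map_map _ _ _).symm
    _ = _ := by rw [Multiset.map_univ_val_equiv]

lemma permA_permA {n k : ℕ} (w : Equiv.Perm (Fin n)) (b : Mnk n k) :
    permA w⁻¹ (permA w b) = b := by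
  apply Subtype.ext; funext i; simp [permA]

lemma full_eq_of_Epairs_eq {n k : ℕ} {a c a' c' : Mnk n k} (h : Epairs a c = Epairs a' c') :
    Multiset.map (fun i => (a.1 i, c.1 i)) Finset.univ.val
      = Multiset.map (fun i => (a'.1 i, c'.1 i)) Finset.univ.val := by
  classical
  set f : Fin n → ℕ × ℕ := fun i => (a.1 i, c.1 i) with hf
  set g : Fin n → ℕ × ℕ := fun i => (a'.1 i, c'.1 i) with hg
  set s := Multiset.map f Finset.univ.val with hs
  set t := Multiset.map g Finset.univ.val with ht
  have key : ∀ u : Multiset (ℕ × ℕ),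
      Multiset.filter (fun p => ¬ p ≠ ((0 : ℕ), (0 : ℕ))) u
        = Multiset.replicate (Multiset.count (0, 0) u) (0, 0) := by
    intro u
    rw [← Multiset.filter_eq']
    exact Multiset.filter_congr fun x _ => by simp
  have hcards : Multiset.card s = Multiset.card t := by
    simp [hs, ht]
  have hcount : Multiset.count ((0 : ℕ), (0 : ℕ)) s = Multiset.count (0, 0) t := by
    have e1 := congrArg Multiset.card (Multiset.filter_add_not (fun p => p ≠ ((0:ℕ),(0:ℕ))) s)
    have e2 := congrArg Multiset.card (Multiset.filter_add_not (fun p => p ≠ ((0:ℕ),(0:ℕ))) t)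
    rw [Multiset.card_add, key s] at e1
    rw [Multiset.card_add, key t] at e2
    have hP : Multiset.card (Multiset.filter (fun p => p ≠ ((0:ℕ),(0:ℕ))) s)
        = Multiset.card (Multiset.filter (fun p => p ≠ ((0:ℕ),(0:ℕ))) t) := by
      have : Epairs a c = Multiset.filter (fun p => p ≠ ((0:ℕ),(0:ℕ))) s := rfl
      rw [← this, h]; rfl
    simp only [Multiset.card_replicate] at e1 e2
    omega
  calc s = Multiset.filter (fun p => p ≠ ((0:ℕ),(0:ℕ))) s
            + Multiset.replicate (Multiset.count (0, 0) s) (0, 0) := by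
            rw [← key s, Multiset.filter_add_not]
    _ = Multiset.filter (fun p => p ≠ ((0:ℕ),(0:ℕ))) t
            + Multiset.replicate (Multiset.count (0, 0) t) (0, 0) := by
            rw [hcount]
            exact congrArg (fun z => z + Multiset.replicate (Multiset.count ((0:ℕ),(0:ℕ)) t) ((0:ℕ),(0:ℕ))) h
    _ = t := by rw [← key t, Multiset.filter_add_not]


lemma card_well_defined {n k : ℕ} (m1 m2 : Multiset (ℕ × ℕ)) {a c a' c' : Mnk n k}
    (h : Epairs a c = Epairs a' c') :
    Nat.card {b : Mnk n k // Epairs a b = m2 ∧ Epairs b c = m1}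
      = Nat.card {b : Mnk n k // Epairs a' b = m2 ∧ Epairs b c' = m1} := by
  obtain ⟨σ, hσ⟩ := exists_perm_of_map_eq (full_eq_of_Epairs_eq h)
  have ha' : a' = permA σ a := by
    apply Subtype.ext; funext j
    have h0 := congrArg Prod.fst (congrFun hσ (σ⁻¹ j))
    simpa [permA] using h0.symm
  have hc' : c' = permA σ c := by
    apply Subtype.ext; funext j
    have h0 := congrArg Prod.snd (congrFun hσ (σ⁻¹ j))
    simpa [permA] using h0.symm
  subst ha' hc'
  have hcan : ∀ b : Mnk n k, permA σ (permA σ⁻¹ b) = b := by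
    intro b
    have h0 := permA_permA σ⁻¹ b
    simpa using h0
  refine Nat.card_congr ⟨fun b => ⟨permA σ b.1, ?_⟩, fun b => ⟨permA σ⁻¹ b.1, ?_⟩, ?_, ?_⟩
  · rw [Epairs_permA, Epairs_permA]; exact b.2
  · constructor
    · have e1 : Epairs (permA σ⁻¹ (permA σ a)) (permA σ⁻¹ b.1) = m2 := by
        rw [Epairs_permA]; exact b.2.1
      rwa [permA_permA] at e1
    · have e2 : Epairs (permA σ⁻¹ b.1) (permA σ⁻¹ (permA σ c)) = m1 := by
        rw [Epairs_permA]; exact b.2.2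
      rwa [permA_permA] at e2
  · intro b; exact Subtype.ext (permA_permA σ b.1)
  · intro b; exact Subtype.ext (hcan b.1)


/-- Composition of integral operators: `T_{m₁} ∘ T_{m₂} = Σ_m α_m T_m`, where
`α_m = |{b : E(a,b)=m₂ ∧ E(b,c)=m₁}|` for any `a,c` with `E(a,c) = m`; in particular this
cardinality depends only on `m` and not on the choice of `(a,c)`. -/
theorem stmt2 (F : Type) [Field F] (n k : ℕ) (hn : 0 < n) (hk : 0 < k)
    (m1 m2 : Multiset (ℕ × ℕ)) (hm1 : IsMSP k m1) (hr1 : Multiset.card m1 ≤ n)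
    (hm2 : IsMSP k m2) (hr2 : Multiset.card m2 ≤ n) :
    ∃ α : Multiset (ℕ × ℕ) → ℕ,
      (∀ (m : Multiset (ℕ × ℕ)) (a c : Mnk n k), Epairs a c = m →
        α m = Nat.card {b : Mnk n k // Epairs a b = m2 ∧ Epairs b c = m1}) ∧
      Tm F n k m1 ∘ₗ Tm F n k m2 =
        ∑ m ∈ Finset.image (fun p : Mnk n k × Mnk n k => Epairs p.1 p.2) Finset.univ,
          (α m : F) • Tm F n k m := by
  classical
  refine ⟨fun m => if h : ∃ p : Mnk n k × Mnk n k, Epairs p.1 p.2 = m then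
      Nat.card {b : Mnk n k // Epairs h.choose.1 b = m2 ∧ Epairs b h.choose.2 = m1}
    else 0, ?_, ?_⟩
  case refine_1 =>
    intro m a c hac
    have hex : ∃ p : Mnk n k × Mnk n k, Epairs p.1 p.2 = m := ⟨(a, c), hac⟩
    show (if h : ∃ p : Mnk n k × Mnk n k, Epairs p.1 p.2 = m then
        Nat.card {b : Mnk n k // Epairs h.choose.1 b = m2 ∧ Epairs b h.choose.2 = m1}
      else 0) = _
    rw [dif_pos hex]
    exact card_well_defined m1 m2 (by rw [hex.choose_spec, ← hac])
  have hα : ∀ (a c : Mnk n k),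
      (if h : ∃ p : Mnk n k × Mnk n k, Epairs p.1 p.2 = Epairs a c then
        Nat.card {b : Mnk n k // Epairs h.choose.1 b = m2 ∧ Epairs b h.choose.2 = m1}
      else 0)
      = Nat.card {b : Mnk n k // Epairs a b = m2 ∧ Epairs b c = m1} := by
    intro a c
    have hex : ∃ p : Mnk n k × Mnk n k, Epairs p.1 p.2 = Epairs a c := ⟨(a, c), rfl⟩
    rw [dif_pos hex]
    exact card_well_defined m1 m2 hex.choose_spec
  apply LinearMap.ext; intro f; funext c
  have lhs_eq : (Tm F n k m1 ∘ₗ Tm F n k m2) f c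
      = ∑ a : Mnk n k,
          ((Finset.univ.filter fun b : Mnk n k => Epairs a b = m2 ∧ Epairs b c = m1).card : F)
            * f a := by
    show (∑ b : Mnk n k, if Epairs b c = m1 then
        (∑ a : Mnk n k, if Epairs a b = m2 then f a else 0) else 0)
      = ∑ a : Mnk n k,
          ((Finset.univ.filter fun b : Mnk n k => Epairs a b = m2 ∧ Epairs b c = m1).card : F)
            * f a
    have step1 : ∀ b : Mnk n k, (if Epairs b c = m1 then
        (∑ a : Mnk n k, if Epairs a b = m2 then f a else 0) else 0)
        = ∑ a : Mnk n k, if Epairs a b = m2 ∧ Epairs b c = m1 then f a else 0 := by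
      intro b
      by_cases h : Epairs b c = m1 <;> simp [h]
    rw [Finset.sum_congr rfl fun b _ => step1 b, Finset.sum_comm]
    refine Finset.sum_congr rfl fun a _ => ?_
    rw [← Finset.sum_filter, Finset.sum_const, nsmul_eq_mul]
  rw [lhs_eq]
  have Tm_apply : ∀ (m : Multiset (ℕ × ℕ)) (g : Mnk n k → F) (b : Mnk n k),
      Tm F n k m g b = ∑ a : Mnk n k, if Epairs a b = m then g a else 0 := fun _ _ _ => rfl
  rw [LinearMap.sum_apply]
  simp only [LinearMap.smul_apply, Finset.sum_apply, Pi.smul_apply, smul_eq_mul, Tm_apply,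
    Finset.mul_sum, mul_ite, mul_zero]
  rw [Finset.sum_comm]
  refine Finset.sum_congr rfl fun a _ => ?_
  rw [Finset.sum_eq_single_of_mem (Epairs a c)
    (Finset.mem_image.mpr ⟨(a, c), Finset.mem_univ _, rfl⟩)
    (fun m _ hm => by rw [if_neg (fun hh => hm hh.symm)])]
  rw [if_pos rfl, hα a c, Nat.card_eq_fintype_card, Fintype.card_subtype]
end

section
/- Let m_1, m_2, m be multiset partitions of {1^k,1'^k}. There exists a polynomial p with rational coefficients such that for every positive integer n and all a, c ∈ M(n,k) with E(a,c) = m, one has |{b ∈ M(n,k) : E(a,b) = m_2 and E(b,c) = m_1}| = p(n). Moreover, p takes integer values at all integers. -/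
open Finset

section NonzeroValues

variable {ι κ α β : Type*} [Fintype ι] [Fintype κ]

lemma map_univ_val_comp_equiv (e : κ ≃ ι) (u : ι → β) :
    univ.val.map (u ∘ e) = univ.val.map u := by
  rw [← Multiset.map_map, Multiset.map_univ_val_equiv]

lemma exists_map_univ_val_eq (S : Multiset β) (h : Multiset.card S = Fintype.card ι) :
    ∃ u : ι → β, univ.val.map u = S := by
  refine ⟨S.toList.get ∘ Fintype.equivFinOfCardEq (by simpa using h.symm), ?_⟩
  rw [map_univ_val_comp_equiv, Fin.univ_val_map, List.ofFn_get, Multiset.coe_toList]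

lemma exists_equiv_comp_eq_of_map_univ_val_eq [DecidableEq β] {u : ι → β} {v : κ → β}
    (h : univ.val.map u = univ.val.map v) : ∃ e : ι ≃ κ, v ∘ e = u := by
  have hfib : ∀ y, Fintype.card {i // u i = y} = Fintype.card {j // v j = y} := fun y => by
    have := congrArg (Multiset.count y) h
    simp only [Multiset.count_map, Fintype.card_subtype, card_def, filter_val] at this ⊢
    simpa only [eq_comm] using this
  exact ⟨Equiv.ofFiberEquiv fun y => Fintype.equivOfCardEq (hfib y),
    funext (Equiv.ofFiberEquiv_map _)⟩

variable [DecidableEq α] [DecidableEq β] [Zero α] [Zero β]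

def nonzeroValues (u : ι → α) : Multiset α :=
  (univ.val.map u).filter (· ≠ 0)

lemma map_univ_val_eq_nonzeroValues_add_replicate (u : ι → α) :
    univ.val.map u = nonzeroValues u +
      Multiset.replicate (Fintype.card ι - Multiset.card (nonzeroValues u)) 0 := by
  have hsplit := Multiset.filter_add_not (· ≠ 0) (univ.val.map u)
  simp only [not_not, Multiset.filter_eq' _ (0 : α)] at hsplit
  have hcard := congrArg Multiset.card hsplit
  rw [Multiset.card_add, Multiset.card_replicate, Multiset.card_map, card_val, card_univ]
    at hcard
  rw [nonzeroValues, ← hcard, Nat.add_sub_cancel_left]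
  exact hsplit.symm

lemma nonzeroValues_eq_iff_map_univ_val_eq {T : Multiset α} (hT : 0 ∉ T) (u : ι → α) :
    nonzeroValues u = T ↔
      univ.val.map u = T + Multiset.replicate (Fintype.card ι - Multiset.card T) 0 := by
  constructor
  · rintro rfl
    exact map_univ_val_eq_nonzeroValues_add_replicate u
  · intro hu
    rw [nonzeroValues, hu, Multiset.filter_add,
      (Multiset.filter_eq_self (p := (· ≠ 0))).2 fun x hx h0 => hT (h0 ▸ hx),
      Multiset.filter_eq_nil.2 fun x hx => not_not.2 (Multiset.eq_of_mem_replicate hx), add_zero]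

lemma map_univ_val_eq_of_nonzeroValues_eq {u : ι → α} {v : κ → α}
    (hcard : Fintype.card ι = Fintype.card κ) (h : nonzeroValues u = nonzeroValues v) :
    univ.val.map u = univ.val.map v := by
  rw [map_univ_val_eq_nonzeroValues_add_replicate u, map_univ_val_eq_nonzeroValues_add_replicate v,
    h, hcard]

lemma card_nonzeroValues_le (u : ι → α) : Multiset.card (nonzeroValues u) ≤ Fintype.card ι :=
  (Multiset.card_le_card (Multiset.filter_le _ _)).trans (by simp)

lemma nonzeroValues_comp_equiv (e : κ ≃ ι) (u : ι → α) :
    nonzeroValues (u ∘ e) = nonzeroValues u := by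
  rw [nonzeroValues, map_univ_val_comp_equiv, nonzeroValues]

lemma nonzeroValues_sumElim (u : ι → α) (v : κ → α) :
    nonzeroValues (Sum.elim u v) = nonzeroValues u + nonzeroValues v := by
  rw [nonzeroValues, ← univ_disjSum_univ, val_disjSum, Multiset.disjSum, Multiset.map_add,
    Multiset.map_map, Multiset.map_map, Multiset.filter_add]
  rfl

lemma nonzeroValues_comp (g : α → β) (hg : ∀ x, g x = 0 ↔ x = 0) (u : ι → α) :
    nonzeroValues (g ∘ u) = (nonzeroValues u).map g := by
  rw [nonzeroValues, nonzeroValues, ← Multiset.map_map, Multiset.filter_map]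
  congr 1
  exact Multiset.filter_congr fun x _ => (hg x).not

lemma nonzeroValues_zero : nonzeroValues (0 : ι → α) = 0 := by
  simpa [nonzeroValues, Multiset.filter_eq_nil] using fun _ => Multiset.eq_of_mem_replicate

lemma finite_nonzeroValues_eq (T : Multiset α) :
    Finite {h : ι → α // nonzeroValues h = T} := by
  refine Set.Finite.to_subtype <|
    (Set.Finite.pi' fun _ => (insert 0 T.toFinset).finite_toSet).subset fun h hh i => ?_
  by_cases hi : h i = 0
  · simp [hi]
  · have : h i ∈ nonzeroValues h :=
      Multiset.mem_filter.2 ⟨Multiset.mem_map_of_mem _ (mem_univ_val i), hi⟩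
    rw [hh] at this
    simp [this]

end NonzeroValues

lemma sum_nonzeroValues {ι α : Type*} [Fintype ι] [AddCommMonoid α] [DecidableEq α]
    (u : ι → α) : (nonzeroValues u).sum = ∑ i, u i := by
  have hzero : ((univ.val.map u).filter (¬ · ≠ 0)).sum = 0 :=
    Multiset.sum_eq_zero fun x hx => not_not.1 (Multiset.mem_filter.1 hx).2
  rw [sum_eq_multiset_sum, ← Multiset.filter_add_not (· ≠ 0) (univ.val.map u),
    Multiset.sum_add, hzero, add_zero]
  rfl

section SymmetryFactor

open Nat Equiv MulAction

variable {ι α : Type*} [DecidableEq α]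

def symmetryFactor (S : Multiset α) : ℕ := ∏ v ∈ S.toFinset, (S.count v)!

lemma symmetryFactor_pos (S : Multiset α) : 0 < symmetryFactor S :=
  prod_pos fun _ _ => factorial_pos _

lemma symmetryFactor_dvd_factorial_card (S : Multiset α) :
    symmetryFactor S ∣ (Multiset.card S)! := by
  have := prod_factorial_dvd_factorial_sum S.toFinset S.count
  rwa [Multiset.toFinset_sum_count_eq] at this

lemma symmetryFactor_add_replicate [Zero α] {T : Multiset α} (hT : 0 ∉ T) (j : ℕ) :
    symmetryFactor (T + Multiset.replicate j 0) = symmetryFactor T * j ! := by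
  have hsub : (T + Multiset.replicate j 0).toFinset ⊆ insert 0 T.toFinset := by
    intro v hv
    rw [Multiset.mem_toFinset, Multiset.mem_add] at hv
    rcases hv with hv | hv
    · exact mem_insert_of_mem (Multiset.mem_toFinset.2 hv)
    · exact mem_insert.2 (Or.inl (Multiset.eq_of_mem_replicate hv))
  rw [symmetryFactor, prod_subset hsub fun v _ hv => by
    rw [Multiset.count_eq_zero_of_notMem (Multiset.mem_toFinset.not.1 hv), factorial_zero],
    prod_insert (by simpa using hT), mul_comm, symmetryFactor]
  congr 1
  · refine prod_congr rfl fun v hv => ?_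
    have hv0 : v ≠ 0 := fun h => hT (h ▸ Multiset.mem_toFinset.1 hv)
    simp [Multiset.count_replicate, hv0.symm]
  · simp [Multiset.count_eq_zero_of_notMem hT]

lemma exists_intCast_eq_inv_symmetryFactor_mul_descPochhammer (T : Multiset α) (z : ℤ) :
    ∃ t : ℤ, (symmetryFactor T : ℚ)⁻¹ * (descPochhammer ℚ (Multiset.card T)).eval (z : ℚ) = t := by
  have hdvd : ((Multiset.card T)! : ℤ) ∣ (descPochhammer ℤ (Multiset.card T)).eval z :=
    ⟨Ring.choose z _, by
      rw [Polynomial.eval_eq_smeval, Ring.descPochhammer_eq_factorial_smul_choose, nsmul_eq_mul]⟩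
  obtain ⟨t, ht⟩ := (Int.natCast_dvd_natCast.2 (symmetryFactor_dvd_factorial_card T)).trans hdvd
  refine ⟨t, ?_⟩
  have hpos : (symmetryFactor T : ℚ) ≠ 0 := by exact_mod_cast (symmetryFactor_pos T).ne'
  rw [← descPochhammer_eval_cast, ht]
  push_cast
  field_simp

variable [Fintype ι]

lemma orbit_domMulAct_perm (u : ι → α) :
    orbit (Perm ι)ᵈᵐᵃ u = {h | univ.val.map h = univ.val.map u} := by
  ext h
  constructor
  · rintro ⟨g, rfl⟩
    exact map_univ_val_comp_equiv (DomMulAct.mk.symm g) u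
  · intro hh
    obtain ⟨e, he⟩ := exists_equiv_comp_eq_of_map_univ_val_eq hh
    exact ⟨DomMulAct.mk e, he⟩

lemma symmetryFactor_map_univ_val [DecidableEq ι] (u : ι → α) :
    symmetryFactor (univ.val.map u) = Fintype.card {g : Perm ι // u ∘ g = u} := by
  rw [DomMulAct.stabilizer_card']
  refine prod_congr rfl fun v _ => ?_
  rw [Multiset.count_map, Fintype.card_subtype, card_def, filter_val]
  simp only [eq_comm]

lemma card_stabilizer_domMulAct_perm (u : ι → α) :
    Nat.card (stabilizer (Perm ι)ᵈᵐᵃ u) = symmetryFactor (univ.val.map u) := by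
  classical
  rw [symmetryFactor_map_univ_val, ← Nat.card_eq_fintype_card]
  exact Nat.card_congr (subtypeEquiv DomMulAct.mk.symm fun _ => DomMulAct.mem_stabilizer_iff)

theorem card_nonzeroValues_eq_mul_symmetryFactor [Zero α] {T : Multiset α} (hT : 0 ∉ T) :
    Nat.card {h : ι → α // nonzeroValues h = T} * symmetryFactor T =
      (Fintype.card ι).descFactorial (Multiset.card T) := by
  classical
  rcases lt_or_ge (Fintype.card ι) (Multiset.card T) with hlt | hle
  · have : IsEmpty {h : ι → α // nonzeroValues h = T} :=
      ⟨fun h => (card_nonzeroValues_le h.1).not_gt (by rwa [h.2])⟩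
    rw [Nat.card_of_isEmpty, zero_mul, descFactorial_eq_zero_iff_lt.2 hlt]
  obtain ⟨u, hu⟩ := exists_map_univ_val_eq (ι := ι)
    (T + Multiset.replicate (Fintype.card ι - Multiset.card T) 0) (by simp; omega)
  have hfiber : {h : ι → α | nonzeroValues h = T} = orbit (Perm ι)ᵈᵐᵃ u := by
    ext h
    rw [orbit_domMulAct_perm, hu]
    exact nonzeroValues_eq_iff_map_univ_val_eq hT h
  have horbit := (stabilizer (Perm ι)ᵈᵐᵃ u).card_mul_index
  rw [index_stabilizer, ← hfiber, card_stabilizer_domMulAct_perm, hu,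
    symmetryFactor_add_replicate hT, Nat.card_congr DomMulAct.mk.symm, Nat.card_eq_fintype_card,
    Fintype.card_perm, ← factorial_mul_descFactorial hle] at horbit
  have hcard : Nat.card {h : ι → α // nonzeroValues h = T} =
      {h | nonzeroValues h = T}.ncard := rfl
  refine Nat.eq_of_mul_eq_mul_left (factorial_pos (Fintype.card ι - Multiset.card T)) ?_
  rw [hcard, ← horbit]
  ring

end SymmetryFactor

section MiddleCount

variable {ι κ σ : Type*} [Fintype ι] [Fintype κ] [Fintype σ] {m1 m2 : Multiset (ℕ × ℕ)}

def nonzeroPairs (u v : ι → ℕ) : Multiset (ℕ × ℕ) := nonzeroValues fun i => (u i, v i)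

lemma sum_map_snd_nonzeroPairs (u v : ι → ℕ) :
    ((nonzeroPairs u v).map Prod.snd).sum = ∑ i, v i := by
  rw [← Multiset.snd_sum, nonzeroPairs, sum_nonzeroValues, Prod.snd_sum]

lemma nonzeroPairs_comp_equiv (e : κ ≃ ι) (u v : ι → ℕ) :
    nonzeroPairs (u ∘ e) (v ∘ e) = nonzeroPairs u v :=
  nonzeroValues_comp_equiv e fun i => (u i, v i)

lemma nonzeroPairs_sumElim (u v : ι → ℕ) (u' v' : κ → ℕ) :
    nonzeroPairs (Sum.elim u u') (Sum.elim v v') = nonzeroPairs u v + nonzeroPairs u' v' := by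
  rw [nonzeroPairs, nonzeroPairs, nonzeroPairs, ← nonzeroValues_sumElim]
  congr
  funext i
  cases i <;> rfl

lemma nonzeroPairs_zero_left (v : ι → ℕ) :
    nonzeroPairs 0 v = (nonzeroValues v).map (Prod.mk 0) :=
  nonzeroValues_comp (Prod.mk 0) (fun x => by simp [Prod.ext_iff]) v

lemma nonzeroPairs_zero_right (u : ι → ℕ) :
    nonzeroPairs u 0 = (nonzeroValues u).map (·, 0) :=
  nonzeroValues_comp (·, 0) (fun x => by simp [Prod.ext_iff]) u

lemma nonzeroPairs_sumElim_zero (u : κ → ℕ × ℕ) :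
    nonzeroPairs (Sum.elim (Prod.fst ∘ u) (0 : σ → ℕ)) (Sum.elim (Prod.snd ∘ u) 0) =
      nonzeroValues u := by
  rw [nonzeroPairs_sumElim, nonzeroPairs_zero_left, nonzeroValues_zero, Multiset.map_zero,
    add_zero]
  rfl

lemma le_sum_map_snd_of_nonzeroPairs_le {u v : ι → ℕ} (h : nonzeroPairs u v ≤ m2) (i : ι) :
    v i ≤ (m2.map Prod.snd).sum := by
  by_cases hv : v i = 0
  · exact hv ▸ Nat.zero_le _
  have hmem : (u i, v i) ∈ m2 := Multiset.mem_of_le h <|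
    Multiset.mem_filter.2 ⟨Multiset.mem_map_of_mem _ (mem_univ_val i), by simp [hv]⟩
  exact Multiset.le_sum_of_mem (Multiset.mem_map_of_mem Prod.snd hmem)

noncomputable def middleCount (m1 m2 : Multiset (ℕ × ℕ)) (a c : ι → ℕ) : ℕ :=
  Nat.card {b : ι → ℕ // nonzeroPairs a b = m2 ∧ nonzeroPairs b c = m1}

lemma card_epairs_eq_middleCount {n k : ℕ} (hm2 : (m2.map Prod.snd).sum = k) (a c : Mnk n k) :
    Nat.card {b : Mnk n k // Epairs a b = m2 ∧ Epairs b c = m1} = middleCount m1 m2 a.1 c.1 :=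
  Nat.card_congr <| Equiv.subtypeSubtypeEquivSubtype
    (q := fun b => nonzeroPairs a.1 b = m2 ∧ nonzeroPairs b c.1 = m1) fun hb => by
      rw [← hm2, ← hb.1, sum_map_snd_nonzeroPairs]

lemma middleCount_comp_equiv (e : ι ≃ κ) (a c : κ → ℕ) :
    middleCount m1 m2 (a ∘ e) (c ∘ e) = middleCount m1 m2 a c :=
  Nat.card_congr <| (e.arrowCongr (Equiv.refl ℕ)).subtypeEquiv fun b => by
    rw [← nonzeroPairs_comp_equiv e a, ← nonzeroPairs_comp_equiv e _ c]
    simp [Function.comp_def]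

lemma middleCount_eq_of_nonzeroPairs_eq (hcard : Fintype.card ι = Fintype.card κ)
    {a c : ι → ℕ} {a' c' : κ → ℕ} (h : nonzeroPairs a c = nonzeroPairs a' c') :
    middleCount m1 m2 a c = middleCount m1 m2 a' c' := by
  obtain ⟨e, he⟩ :=
    exists_equiv_comp_eq_of_map_univ_val_eq (map_univ_val_eq_of_nonzeroValues_eq hcard h)
  have ha : a = a' ∘ e := funext fun i => congrArg Prod.fst (congrFun he i).symm
  have hc : c = c' ∘ e := funext fun i => congrArg Prod.snd (congrFun he i).symm
  rw [ha, hc, middleCount_comp_equiv]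

end MiddleCount

section Canonical

open Polynomial

variable {κ σ : Type*} [Fintype κ] [DecidableEq κ] [Fintype σ] (m1 m2 : Multiset (ℕ × ℕ))
  (u : κ → ℕ × ℕ)

/-- For `a = Sum.elim (Prod.fst ∘ u) 0`, `c = Sum.elim (Prod.snd ∘ u) 0` and `b = Sum.elim f h`,
the condition `E(a,b) = m₂` forces the nonzero values of `h` to be this multiset. -/
def offSupportValues (f : κ → ℕ) : Multiset ℕ :=
  (m2 - nonzeroPairs (Prod.fst ∘ u) f).map Prod.snd

def compatibleSupportValues : Finset (κ → ℕ) :=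
  (Fintype.piFinset fun _ => range ((m2.map Prod.snd).sum + 1)).filter fun f =>
    nonzeroPairs (Prod.fst ∘ u) f + (offSupportValues m2 u f).map (Prod.mk 0) = m2 ∧
      nonzeroPairs f (Prod.snd ∘ u) + (offSupportValues m2 u f).map (·, 0) = m1

variable {m1 m2 u}

lemma eq_and_eq_iff_mem_compatibleSupportValues (f : κ → ℕ) (h : σ → ℕ) :
    (nonzeroPairs (Prod.fst ∘ u) f + (nonzeroValues h).map (Prod.mk 0) = m2 ∧
        nonzeroPairs f (Prod.snd ∘ u) + (nonzeroValues h).map (·, 0) = m1) ↔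
      f ∈ compatibleSupportValues m1 m2 u ∧ nonzeroValues h = offSupportValues m2 u f := by
  constructor
  · rintro ⟨h2, h1⟩
    have hT : offSupportValues m2 u f = nonzeroValues h := by
      rw [offSupportValues, ← h2, add_tsub_cancel_left, Multiset.map_map]
      exact Multiset.map_id' _
    refine ⟨mem_filter.2 ⟨Fintype.mem_piFinset.2 fun j => mem_range_succ_iff.2 ?_, ?_⟩,
      hT.symm⟩
    · exact le_sum_map_snd_of_nonzeroPairs_le (h2 ▸ Multiset.le_add_right _ _) j
    · rw [hT]
      exact ⟨h2, h1⟩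
  · rintro ⟨hf, hT⟩
    rw [hT]
    exact (mem_filter.1 hf).2

lemma zero_notMem_offSupportValues (hm1 : (0, 0) ∉ m1) {f : κ → ℕ}
    (hf : f ∈ compatibleSupportValues m1 m2 u) : 0 ∉ offSupportValues m2 u f := fun h0 =>
  hm1 <| (mem_filter.1 hf).2.2 ▸
    Multiset.mem_add.2 (Or.inr (Multiset.mem_map_of_mem (·, 0) h0))

lemma middleCount_sumElim :
    middleCount m1 m2 (Sum.elim (Prod.fst ∘ u) (0 : σ → ℕ)) (Sum.elim (Prod.snd ∘ u) 0) =
      ∑ f ∈ compatibleSupportValues m1 m2 u,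
        Nat.card {h : σ → ℕ // nonzeroValues h = offSupportValues m2 u f} := by
  have hfinite := fun f : κ → ℕ => finite_nonzeroValues_eq (ι := σ) (offSupportValues m2 u f)
  let restrict := (Equiv.sumArrowEquivProdArrow κ σ ℕ).subtypeEquiv
      (p := fun b => nonzeroPairs (Sum.elim (Prod.fst ∘ u) 0) b = m2 ∧
        nonzeroPairs b (Sum.elim (Prod.snd ∘ u) 0) = m1)
      (q := fun x => x.1 ∈ compatibleSupportValues m1 m2 u ∧
        nonzeroValues x.2 = offSupportValues m2 u x.1) fun b => by
    rw [← Sum.elim_comp_inl_inr b, nonzeroPairs_sumElim, nonzeroPairs_sumElim,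
      nonzeroPairs_zero_left, nonzeroPairs_zero_right]
    exact eq_and_eq_iff_mem_compatibleSupportValues (b ∘ Sum.inl) (b ∘ Sum.inr)
  let fiberwise : {x : (κ → ℕ) × (σ → ℕ) //
      x.1 ∈ compatibleSupportValues m1 m2 u ∧ nonzeroValues x.2 = offSupportValues m2 u x.1} ≃
      Σ f : compatibleSupportValues m1 m2 u,
        {h : σ → ℕ // nonzeroValues h = offSupportValues m2 u f} :=
    { toFun x := ⟨⟨x.1.1, x.2.1⟩, ⟨x.1.2, x.2.2⟩⟩
      invFun y := ⟨(y.1.1, y.2.1), y.1.2, y.2.2⟩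
      left_inv _ := rfl
      right_inv _ := rfl }
  rw [middleCount, Nat.card_congr (restrict.trans fiberwise), Nat.card_sigma]
  exact sum_coe_sort (compatibleSupportValues m1 m2 u) fun f =>
    Nat.card {h : σ → ℕ // nonzeroValues h = offSupportValues m2 u f}

variable (m1 m2 u) in
noncomputable def middleCountPoly : ℚ[X] :=
  ∑ f ∈ compatibleSupportValues m1 m2 u,
    C (symmetryFactor (offSupportValues m2 u f) : ℚ)⁻¹ *
      (descPochhammer ℚ (Multiset.card (offSupportValues m2 u f))).comp
        (X - C (Fintype.card κ : ℚ))

lemma eval_middleCountPoly (x : ℚ) :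
    (middleCountPoly m1 m2 u).eval x = ∑ f ∈ compatibleSupportValues m1 m2 u,
      (symmetryFactor (offSupportValues m2 u f) : ℚ)⁻¹ *
        (descPochhammer ℚ (Multiset.card (offSupportValues m2 u f))).eval
          (x - Fintype.card κ) := by
  simp [middleCountPoly, eval_finsetSum]

lemma middleCount_sumElim_eq_eval (hm1 : (0, 0) ∉ m1) :
    (middleCount m1 m2 (Sum.elim (Prod.fst ∘ u) (0 : σ → ℕ)) (Sum.elim (Prod.snd ∘ u) 0) : ℚ) =
      (middleCountPoly m1 m2 u).eval ((Fintype.card κ + Fintype.card σ : ℕ) : ℚ) := by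
  rw [middleCount_sumElim, eval_middleCountPoly, Nat.cast_sum]
  refine sum_congr rfl fun f hf => ?_
  have hcount := card_nonzeroValues_eq_mul_symmetryFactor (ι := σ)
    (zero_notMem_offSupportValues hm1 hf)
  have hpos : (symmetryFactor (offSupportValues m2 u f) : ℚ) ≠ 0 := by
    exact_mod_cast (symmetryFactor_pos _).ne'
  rw [Nat.cast_add, add_sub_cancel_left, descPochhammer_eval_eq_descFactorial, ← hcount]
  push_cast
  field_simp

lemma exists_intCast_eq_eval_middleCountPoly (z : ℤ) :
    ∃ t : ℤ, (middleCountPoly m1 m2 u).eval (z : ℚ) = t := by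
  choose t ht using fun f : κ → ℕ => exists_intCast_eq_inv_symmetryFactor_mul_descPochhammer
    (offSupportValues m2 u f) (z - Fintype.card κ)
  refine ⟨∑ f ∈ compatibleSupportValues m1 m2 u, t f, ?_⟩
  rw [eval_middleCountPoly, Int.cast_sum]
  refine sum_congr rfl fun f _ => ?_
  rw [← ht]
  push_cast
  rfl

end Canonical

theorem stmt3_general (k : ℕ) (m1 m2 m : Multiset (ℕ × ℕ))
    (hm1 : IsMSP k m1) (hm2 : IsMSP k m2) (hm : IsMSP k m) :
    ∃ p : Polynomial ℚ,
      (∀ n : ℕ, 0 < n → ∀ a c : Mnk n k, Epairs a c = m →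
        (Nat.card {b : Mnk n k // Epairs a b = m2 ∧ Epairs b c = m1} : ℚ) =
          p.eval (n : ℚ)) ∧
      (∀ z : ℤ, ∃ t : ℤ, p.eval (z : ℚ) = (t : ℚ)) := by
  obtain ⟨u, hu⟩ :=
    exists_map_univ_val_eq (ι := Fin (Multiset.card m)) m (Fintype.card_fin _).symm
  refine ⟨middleCountPoly m1 m2 u, fun n _ a c hac => ?_,
    exists_intCast_eq_eval_middleCountPoly⟩
  have hmn : Multiset.card m ≤ n := by
    rw [← hac]
    exact (card_nonzeroValues_le fun i => (a.1 i, c.1 i)).trans_eq (Fintype.card_fin n)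
  have hcanonical : nonzeroPairs (Sum.elim (Prod.fst ∘ u) 0)
      (Sum.elim (Prod.snd ∘ u) (0 : Fin (n - Multiset.card m) → ℕ)) = Epairs a c := by
    rw [nonzeroPairs_sumElim_zero, hac, nonzeroValues, hu]
    exact Multiset.filter_eq_self.2 fun x hx h0 => hm.1 (by rwa [h0] at hx)
  rw [card_epairs_eq_middleCount hm2.2.2,
    middleCount_eq_of_nonzeroPairs_eq (by simp [hmn]) hcanonical.symm,
    middleCount_sumElim_eq_eval hm1.1]
  simp [hmn]

/-- For multiset partitions `m₁, m₂, m` of `{1^k,1'^k}`, there is a polynomial `p` with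
rational coefficients such that for every positive integer `n` and all `a, c ∈ M(n,k)`
with `E(a,c) = m`, the number of `b ∈ M(n,k)` with `E(a,b) = m₂` and `E(b,c) = m₁`
equals `p(n)`; moreover `p` takes integer values at all integers. -/
theorem stmt3 (k : ℕ) (hk : 0 < k) (m1 m2 m : Multiset (ℕ × ℕ))
    (hm1 : IsMSP k m1) (hm2 : IsMSP k m2) (hm : IsMSP k m) :
    ∃ p : Polynomial ℚ,
      (∀ n : ℕ, 0 < n → ∀ a c : Mnk n k, Epairs a c = m →
        (Nat.card {b : Mnk n k // Epairs a b = m2 ∧ Epairs b c = m1} : ℚ) =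
          p.eval (n : ℚ)) ∧
      (∀ z : ℤ, ∃ t : ℤ, p.eval (z : ℚ) = (t : ℚ)) :=
  stmt3_general k m1 m2 m hm1 hm2 hm
end

section
/- Every multiset partition of {1^k,1'^k} has rank at most 2k, and consequently, if n ≥ 2k, then the dimension of the space of S_n-equivariant linear endomorphisms of F[M(n,k)] (≅ End_{S_n}(Sym^k(F^n))) equals the total number of multiset partitions of {1^k,1'^k}, i.e., the number of multisets of pairs (p,q) of non-negative integers with (p,q) ≠ (0,0) whose first coordinates sum to k and whose second coordinates sum to k. -/
/-- The space of `S_n`-equivariant linear endomorphisms of `F[M(n,k)] ≅ Sym^k(F^n)`. -/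
def EquivariantEnd (F : Type) [Field F] (n k : ℕ) :
    Submodule F (Module.End F (Mnk n k → F)) where
  carrier := {T | ∀ (w : Equiv.Perm (Fin n)) (f : Mnk n k → F) (a : Mnk n k),
    T (fun x => f (permA w x)) a = T f (permA w a)}
  add_mem' := fun hT hS w f a => by
    simp only [LinearMap.add_apply, Pi.add_apply]
    rw [hT w f a, hS w f a]
  zero_mem' := fun w f a => by simp
  smul_mem' := fun c T hT w f a => by
    simp only [LinearMap.smul_apply, Pi.smul_apply]
    rw [hT w f a]

open Finset MulAction

section PermutationModule

variable (G X R : Type*) [Group G] [MulAction G X] [CommSemiring R]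

def equivariantEnd : Submodule R (Module.End R (X → R)) where
  carrier := {T | ∀ (g : G) (f : X → R) (a : X), T (fun x => f (g • x)) a = T f (g • a)}
  add_mem' hT hS g f a := by simp only [LinearMap.add_apply, Pi.add_apply, hT g f a, hS g f a]
  zero_mem' _ _ _ := rfl
  smul_mem' c T hT g f a := by simp only [LinearMap.smul_apply, Pi.smul_apply, hT g f a]

def invariantFunctions : Submodule R (X → R) where
  carrier := {f | ∀ (g : G) (x : X), f (g • x) = f x}
  add_mem' hf hh g x := by simp only [Pi.add_apply, hf g x, hh g x]
  zero_mem' _ _ := rfl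
  smul_mem' c f hf g x := by simp only [Pi.smul_apply, hf g x]

def invariantFunctionsEquiv : invariantFunctions G X R ≃ₗ[R] (orbitRel.Quotient G X → R) where
  toFun f := Quotient.lift f.1 fun x y hxy => by
    obtain ⟨g, rfl⟩ := mem_orbit_iff.1 hxy
    exact f.2 g y
  map_add' f h := funext <| Quotient.ind fun _ => rfl
  map_smul' c f := funext <| Quotient.ind fun _ => rfl
  invFun φ := ⟨fun x => φ ⟦x⟧, fun g x => congrArg φ (Quotient.sound (mem_orbit _ g))⟩
  left_inv _ := rfl
  right_inv φ := funext <| Quotient.ind fun _ => rfl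

variable {G X R} [Fintype X] [DecidableEq X]

theorem toLin'_mem_equivariantEnd_iff (M : Matrix X X R) :
    Matrix.toLin' M ∈ equivariantEnd G X R ↔
      ∀ (g : G) (i j : X), M (g • i) (g • j) = M i j := by
  refine ⟨fun hM g i j => ?_, fun hM g f a => ?_⟩
  · have hsingle : (fun x => (Pi.single (g • j) 1 : X → R) (g • x)) = Pi.single j 1 := by
      funext x
      simp only [Pi.single_apply, smul_left_cancel_iff]
    simpa [hsingle, Matrix.mulVec_single_one] using (hM g (Pi.single (g • j) 1) i).symm
  · change ∑ b, M a b * f (g • b) = ∑ b, M (g • a) b * f b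
    exact Fintype.sum_equiv (MulAction.toPerm g) _ _ fun b => by simp [hM]

variable (G X R)

def equivariantEndEquiv : equivariantEnd G X R ≃ₗ[R] invariantFunctions G (X × X) R :=
  LinearEquiv.ofSubmodules
    (LinearMap.toMatrix' ≪≫ₗ (LinearEquiv.curry R R X X).symm) _ _ <| by
    rw [Submodule.map_equiv_eq_comap_symm]
    ext K
    change Matrix.toLin' (LinearEquiv.curry R R X X K) ∈ equivariantEnd G X R ↔ _
    exact (toLin'_mem_equivariantEnd_iff (LinearEquiv.curry R R X X K : Matrix X X R)).trans
      ⟨fun h g p => h g p.1 p.2, fun h g i j => h g (i, j)⟩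

end PermutationModule

theorem finrank_equivariantEnd (G X R : Type*) [Group G] [MulAction G X] [Fintype X]
    [CommRing R] [StrongRankCondition R] :
    Module.finrank R (equivariantEnd G X R) = Nat.card (orbitRel.Quotient G (X × X)) := by
  classical
  have := Fintype.ofFinite (orbitRel.Quotient G (X × X))
  rw [((equivariantEndEquiv G X R).trans (invariantFunctionsEquiv G (X × X) R)).finrank_eq,
    Module.finrank_fintype_fun_eq_card, Nat.card_eq_fintype_card]

section MultisetTuples

variable {α : Type*}

theorem Multiset.filter_ne_add_replicate_count [DecidableEq α] (m : Multiset α) (x : α) :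
    m.filter (· ≠ x) + Multiset.replicate (m.count x) x = m := by
  rw [← Multiset.filter_eq']
  simpa only [ne_eq, not_not] using Multiset.filter_add_not (· ≠ x) m

theorem Multiset.exists_map_univ_eq_of_card_eq {n : ℕ} {s : Multiset α} (hs : s.card = n) :
    ∃ f : Fin n → α, univ.val.map f = s := by
  obtain ⟨l, rfl⟩ : ∃ l : List α, (l : Multiset α) = s := Quotient.exists_rep s
  rw [Multiset.coe_card] at hs
  subst hs
  exact ⟨l.get, by rw [Fin.univ_val_map, List.ofFn_get]⟩

theorem exists_perm_comp_eq_of_map_univ_eq {ι : Type*} [Fintype ι] [DecidableEq α]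
    {f g : ι → α} (h : univ.val.map f = univ.val.map g) :
    ∃ σ : Equiv.Perm ι, g ∘ σ = f := by
  have hfiber (c : α) : Fintype.card {i // f i = c} = Fintype.card {i // g i = c} := by
    have := congrArg (Multiset.count c) h
    simp only [Multiset.count_map] at this
    simp only [Fintype.card_subtype, Finset.card, Finset.filter_val]
    simpa only [eq_comm] using this
  exact ⟨Equiv.ofFiberEquiv fun c => Fintype.equivOfCardEq (hfiber c),
    funext (Equiv.ofFiberEquiv_map _)⟩

end MultisetTuples

instance (n k : ℕ) : MulAction (Equiv.Perm (Fin n)) (Mnk n k) where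
  smul := permA
  one_smul _ := rfl
  mul_smul _ _ _ := rfl

theorem EquivariantEnd_eq_equivariantEnd (F : Type) [Field F] (n k : ℕ) :
    EquivariantEnd F n k = equivariantEnd (Equiv.Perm (Fin n)) (Mnk n k) F :=
  rfl

theorem IsMSP.card_le {k : ℕ} {m : Multiset (ℕ × ℕ)} (hm : IsMSP k m) :
    Multiset.card m ≤ 2 * k := by
  obtain ⟨h0, h1, h2⟩ := hm
  have hpos : ∀ s ∈ m.map fun p => p.1 + p.2, 1 ≤ s := by
    refine Multiset.forall_mem_map_iff.2 fun ⟨p, q⟩ hpq => ?_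
    have : (p, q) ≠ (0, 0) := ne_of_mem_of_not_mem hpq h0
    simp only [ne_eq, Prod.mk.injEq, not_and_or] at this
    omega
  calc Multiset.card m = Multiset.card (m.map fun p => p.1 + p.2) • 1 := by simp
    _ ≤ (m.map fun p => p.1 + p.2).sum := Multiset.card_nsmul_le_sum hpos
    _ = 2 * k := by rw [Multiset.sum_map_add, h1, h2, two_mul]

namespace Mnk

variable {n k : ℕ}

def columns (a b : Mnk n k) : Multiset (ℕ × ℕ) :=
  univ.val.map fun i => (a.1 i, b.1 i)

theorem card_columns (a b : Mnk n k) : Multiset.card (columns a b) = n := by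
  simp [columns]

theorem columns_smul (w : Equiv.Perm (Fin n)) (a b : Mnk n k) :
    columns (w • a) (w • b) = columns a b := by
  conv_rhs => rw [columns, ← Multiset.map_univ_val_equiv w⁻¹, Multiset.map_map]
  rfl

theorem epairs_add_replicate (a b : Mnk n k) :
    Epairs a b + Multiset.replicate (n - Multiset.card (Epairs a b)) (0, 0) = columns a b := by
  have h := Multiset.filter_ne_add_replicate_count (columns a b) (0, 0)
  have hcount : (columns a b).count (0, 0) = n - Multiset.card (Epairs a b) := by
    have := congrArg Multiset.card h
    rw [Multiset.card_add, Multiset.card_replicate, card_columns] at this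
    exact (Nat.sub_eq_of_eq_add' this.symm).symm
  rwa [hcount] at h

theorem isMSP_epairs (a b : Mnk n k) : IsMSP k (Epairs a b) := by
  have hsum (f : ℕ × ℕ → ℕ) (hf : f (0, 0) = 0) :
      ((Epairs a b).map f).sum = ((columns a b).map f).sum := by
    rw [← epairs_add_replicate a b, Multiset.map_add, Multiset.sum_add, Multiset.map_replicate,
      hf, Multiset.sum_replicate, smul_zero, add_zero]
  refine ⟨by simp [Epairs], ?_, ?_⟩
  · rw [hsum Prod.fst rfl, columns, Multiset.map_map]
    exact a.2
  · rw [hsum Prod.snd rfl, columns, Multiset.map_map]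
    exact b.2

theorem card_epairs_le (a b : Mnk n k) : Multiset.card (Epairs a b) ≤ n :=
  (Multiset.card_le_card (Multiset.filter_le _ _)).trans (card_columns a b).le

theorem epairs_smul (w : Equiv.Perm (Fin n)) (a b : Mnk n k) :
    Epairs (w • a) (w • b) = Epairs a b :=
  congrArg (Multiset.filter _) (columns_smul w a b)

theorem exists_smul_eq_of_epairs_eq {p q : Mnk n k × Mnk n k}
    (h : Epairs p.1 p.2 = Epairs q.1 q.2) : ∃ w : Equiv.Perm (Fin n), w • p = q := by
  have hcol : columns p.1 p.2 = columns q.1 q.2 := by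
    rw [← epairs_add_replicate, h, epairs_add_replicate]
  obtain ⟨σ, hσ⟩ := exists_perm_comp_eq_of_map_univ_eq hcol
  have hcol_at (i : Fin n) := congrFun hσ (σ.symm i)
  simp only [Function.comp_apply, Equiv.apply_symm_apply, Prod.mk.injEq] at hcol_at
  exact ⟨σ, Prod.ext (Subtype.ext (funext fun i => (hcol_at i).1.symm))
    (Subtype.ext (funext fun i => (hcol_at i).2.symm))⟩

theorem exists_epairs_eq {m : Multiset (ℕ × ℕ)} (hm : IsMSP k m)
    (hcard : Multiset.card m ≤ n) :
    ∃ a b : Mnk n k, Epairs a b = m := by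
  obtain ⟨h0, h1, h2⟩ := hm
  obtain ⟨f, hf⟩ := Multiset.exists_map_univ_eq_of_card_eq (n := n)
    (s := m + Multiset.replicate (n - Multiset.card m) (0, 0)) (by simp [hcard])
  have hsum (g : ℕ × ℕ → ℕ) (hg : g (0, 0) = 0) : ∑ i, g (f i) = (m.map g).sum := by
    rw [Finset.sum_eq_multiset_sum, ← Function.comp_def, ← Multiset.map_map g f, hf,
      Multiset.map_add, Multiset.sum_add, Multiset.map_replicate, hg, Multiset.sum_replicate,
      smul_zero, add_zero]
  refine ⟨⟨fun i => (f i).1, (hsum Prod.fst rfl).trans h1⟩,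
    ⟨fun i => (f i).2, (hsum Prod.snd rfl).trans h2⟩, ?_⟩
  change (univ.val.map f).filter _ = m
  rw [hf, Multiset.filter_add, Multiset.filter_eq_self.2 fun p hp => ne_of_mem_of_not_mem hp h0,
    Multiset.filter_eq_nil.2 fun p hp => by simp [Multiset.eq_of_mem_replicate hp], add_zero]

noncomputable def pairOrbitEquivMSP (n k : ℕ) :
    orbitRel.Quotient (Equiv.Perm (Fin n)) (Mnk n k × Mnk n k) ≃
      {m : Multiset (ℕ × ℕ) // IsMSP k m ∧ Multiset.card m ≤ n} :=
  Equiv.ofBijective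
    (Quotient.lift (fun p => ⟨Epairs p.1 p.2, isMSP_epairs p.1 p.2, card_epairs_le p.1 p.2⟩)
      fun p q hpq => by
        obtain ⟨w, rfl⟩ := mem_orbit_iff.1 hpq
        exact Subtype.ext (epairs_smul w q.1 q.2))
    ⟨Quotient.ind₂ fun p q hpq => Quotient.sound <|
        mem_orbit_iff.2 (exists_smul_eq_of_epairs_eq (congrArg Subtype.val hpq.symm)),
      fun ⟨m, hm, hcard⟩ => by
        obtain ⟨a, b, hab⟩ := exists_epairs_eq hm hcard
        exact ⟨⟦(a, b)⟧, Subtype.ext hab⟩⟩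

end Mnk

theorem stmt5_general (F : Type) [Field F] (n k : ℕ) :
    (∀ m : Multiset (ℕ × ℕ), IsMSP k m → Multiset.card m ≤ 2 * k) ∧
    (2 * k ≤ n →
      Module.finrank F (EquivariantEnd F n k) =
        Nat.card {m : Multiset (ℕ × ℕ) // IsMSP k m}) := by
  refine ⟨fun m hm => hm.card_le, fun h2k => ?_⟩
  rw [EquivariantEnd_eq_equivariantEnd, finrank_equivariantEnd,
    Nat.card_congr (Mnk.pairOrbitEquivMSP n k)]
  exact Nat.card_congr <| Equiv.subtypeEquivRight fun m =>
    and_iff_left_of_imp fun hm => hm.card_le.trans h2k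

/-- Every multiset partition of `{1^k,1'^k}` has rank at most `2k`; hence for `n ≥ 2k` the
dimension of `End_{S_n}(Sym^k(F^n))` equals the total number of multiset partitions of
`{1^k,1'^k}`. -/
theorem stmt5 (F : Type) [Field F] (n k : ℕ) (hn : 0 < n) (hk : 0 < k) :
    (∀ m : Multiset (ℕ × ℕ), IsMSP k m → Multiset.card m ≤ 2 * k) ∧
    (2 * k ≤ n →
      Module.finrank F (EquivariantEnd F n k) =
        Nat.card {m : Multiset (ℕ × ℕ) // IsMSP k m}) :=
  stmt5_general F n k
end

section
/- For every multiset partition m of {1^k,1'^k} of rank at most n, one has the operator identity τ_k ∘ T_m ∘ π_k = (1/α_m) Σ_d x_d on F[X(n,k)], where the sum is over all set partitions d of {1,…,k} ⊔ {1',…,k'} whose block-type multiset {(|B ∩ {1,…,k}|, |B ∩ {1',…,k'}|) : B a block of d} equals m, and where α_m = k!/∏_{(p,q)∈m} q!. -/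
/-- The content of `A ∈ X(n,k) = {functions {1,…,k} → {1,…,n}}`:
`ct(A)_j = |A⁻¹(j)|`, an element of `M(n,k)`. -/
def ctM (n k : ℕ) (A : Fin k → Fin n) : Mnk n k :=
  ⟨fun j => (Finset.univ.filter fun r => A r = j).card, by
    have h := Finset.card_eq_sum_card_fiberwise
      (s := (Finset.univ : Finset (Fin k))) (t := (Finset.univ : Finset (Fin n)))
      (f := A) (fun x _ => Finset.mem_univ _)
    simpa using h.symm⟩

/-- The canonical projection `π_k : F[X(n,k)] → F[M(n,k)]`, `π_k(1_A) = 1_{ct(A)}`. -/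
def piOp (F : Type) [Field F] (n k : ℕ) :
    ((Fin k → Fin n) → F) →ₗ[F] (Mnk n k → F) where
  toFun f a := ∑ A : Fin k → Fin n, if ctM n k A = a then f A else 0
  map_add' f g := by
    funext a
    simp only [Pi.add_apply]
    rw [← Finset.sum_add_distrib]
    refine Finset.sum_congr rfl fun A _ => ?_
    by_cases h : ctM n k A = a <;> simp [h]
  map_smul' c f := by
    funext a
    simp only [RingHom.id_apply, Pi.smul_apply, smul_eq_mul]
    rw [Finset.mul_sum]
    refine Finset.sum_congr rfl fun A _ => ?_
    by_cases h : ctM n k A = a <;> simp [h]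

/-- The section `τ_k : F[M(n,k)] → F[X(n,k)]`,
`τ_k(1_a) = (a_1!⋯a_n!/k!) Σ_{A : ct(A)=a} 1_A`. -/
noncomputable def tauOp (F : Type) [Field F] (n k : ℕ) :
    (Mnk n k → F) →ₗ[F] ((Fin k → Fin n) → F) where
  toFun f A :=
    (((∏ j, Nat.factorial ((ctM n k A).1 j) : ℕ) : F) / (Nat.factorial k : F)) *
      f (ctM n k A)
  map_add' f g := by funext A; simp [mul_add]
  map_smul' c f := by
    funext A
    simp only [RingHom.id_apply, Pi.smul_apply, smul_eq_mul]
    ring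

noncomputable instance {k : ℕ} :
    Fintype (Finpartition (Finset.univ : Finset (Fin k ⊕ Fin k))) :=
  Fintype.ofInjective Finpartition.parts fun p q h => by
    cases p; cases q; simpa using h

/-- The block-type multiset of a set partition `d` of `{1,…,k} ⊔ {1',…,k'}`:
the multiset of pairs `(|B ∩ unprimed|, |B ∩ primed|)` over the blocks `B` of `d`. -/
def blockTypeP {k : ℕ} (d : Finpartition (Finset.univ : Finset (Fin k ⊕ Fin k))) :
    Multiset (ℕ × ℕ) :=
  d.parts.val.map fun B =>
    ((B.filter fun x => x.isLeft = true).card, (B.filter fun x => x.isRight = true).card)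

/-- The orbit-basis operator `x_d` on `F[X(n,k)]` attached to a set partition `d` of
`{1,…,k} ⊔ {1',…,k'}`: `x_d(1_A) = Σ_C 1_C`, the sum over those `C` such that the joint
function `Sum.elim A C` takes equal values at two points precisely when they lie in the
same block of `d`. -/
def xdOp (F : Type) [Field F] (n k : ℕ)
    (d : Finpartition (Finset.univ : Finset (Fin k ⊕ Fin k))) :
    Module.End F ((Fin k → Fin n) → F) where
  toFun f C := ∑ A : Fin k → Fin n,
    if (∀ x y : Fin k ⊕ Fin k,
        Sum.elim A C x = Sum.elim A C y ↔ ∃ B ∈ d.parts, x ∈ B ∧ y ∈ B) then f A else 0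
  map_add' f g := by
    funext C
    simp only [Pi.add_apply]
    rw [← Finset.sum_add_distrib]
    refine Finset.sum_congr rfl fun A _ => ?_
    split <;> simp
  map_smul' c f := by
    funext C
    simp only [RingHom.id_apply, Pi.smul_apply, smul_eq_mul]
    rw [Finset.mul_sum]
    refine Finset.sum_congr rfl fun A _ => ?_
    split <;> simp

/-!
Evaluate both sides at `1_A` and read off the coefficient of `1_C`. Exactly one set partition
`d` has a nonzero contribution, namely the partition of `{1,…,k} ⊔ {1',…,k'}` into the fibres
of `Sum.elim A C`, and its block type is `E(ct A, ct C)`. So both sides are supported on the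
pairs with `E(ct A, ct C) = m`, and there the coefficients agree because
`∏_{(p,q) ∈ E(a,b)} q! = ∏_j b_j!`.
-/

open Finset
open scoped Nat

section KernelPartition

variable {α β : Type*} [Fintype α] [DecidableEq α] [DecidableEq β]

def IsKerPartition (g : α → β) (d : Finpartition (univ : Finset α)) : Prop :=
  ∀ x y, g x = g y ↔ ∃ B ∈ d.parts, x ∈ B ∧ y ∈ B

def kerPartition (g : α → β) : Finpartition (univ : Finset α) :=
  Finpartition.ofSetoid (Setoid.ker g)

theorem isKerPartition_kerPartition (g : α → β) : IsKerPartition g (kerPartition g) := by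
  intro x y
  constructor
  · intro hxy
    exact ⟨_, (Finpartition.part_mem _).2 (mem_univ x), Finpartition.mem_part _ (mem_univ x),
      Finpartition.mem_part_ofSetoid_iff_rel.2 hxy⟩
  · rintro ⟨B, hB, hxB, hyB⟩
    rw [← Finpartition.part_eq_of_mem _ hB hxB] at hyB
    exact Finpartition.mem_part_ofSetoid_iff_rel.1 hyB

namespace IsKerPartition

variable {g : α → β} {d d' : Finpartition (univ : Finset α)}

theorem filter_eq_of_mem (h : IsKerPartition g d) {B : Finset α} {x : α} (hB : B ∈ d.parts)
    (hx : x ∈ B) : univ.filter (fun y => g y = g x) = B := by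
  ext y
  simp only [mem_filter, mem_univ, true_and]
  constructor
  · intro hy
    obtain ⟨B', hB', hxB', hyB'⟩ := (h x y).1 hy.symm
    rwa [d.eq_of_mem_parts hB' hB hxB' hx] at hyB'
  · intro hy
    exact ((h x y).2 ⟨B, hB, hx, hy⟩).symm

theorem parts_eq (h : IsKerPartition g d) :
    d.parts = univ.image fun x => univ.filter (fun y => g y = g x) := by
  ext B
  simp only [mem_image, mem_univ, true_and]
  constructor
  · intro hB
    obtain ⟨x, hx⟩ := d.nonempty_of_mem_parts hB
    exact ⟨x, h.filter_eq_of_mem hB hx⟩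
  · rintro ⟨x, rfl⟩
    obtain ⟨B, hB, hxB⟩ := d.exists_mem (mem_univ x)
    rwa [h.filter_eq_of_mem hB hxB]

theorem unique (h : IsKerPartition g d) (h' : IsKerPartition g d') : d = d' :=
  Finpartition.ext (h.parts_eq.trans h'.parts_eq.symm)

theorem parts_val [Fintype β] (h : IsKerPartition g d) :
    d.parts.val = (univ.image g).val.map fun j => univ.filter (fun y => g y = j) := by
  have himage : (univ.image fun x => univ.filter (fun y => g y = g x)) =
      (univ.image g).image fun j => univ.filter (fun y => g y = j) := by
    rw [image_image]
    rfl
  rw [h.parts_eq, himage, image_val_of_injOn]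
  intro j hj j' _ hjj'
  obtain ⟨x, -, rfl⟩ := mem_image.1 hj
  have hx : x ∈ univ.filter (fun y => g y = g x) := by simp
  simp only at hjj'
  rw [hjj'] at hx
  exact (mem_filter.1 hx).2

end IsKerPartition

theorem isKerPartition_iff_eq {g : α → β} {d : Finpartition (univ : Finset α)} :
    IsKerPartition g d ↔ d = kerPartition g :=
  ⟨fun h => h.unique (isKerPartition_kerPartition g),
    fun h => h ▸ isKerPartition_kerPartition g⟩

end KernelPartition

section Contents

variable {n k : ℕ}

theorem epairs_eq_map (a b : Mnk n k) :
    Epairs a b = (univ.filter fun j => (a.1 j, b.1 j) ≠ (0, 0)).val.map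
      fun j => (a.1 j, b.1 j) := by
  rw [Epairs, Multiset.filter_map, filter_val]
  rfl

theorem card_filter_isLeft_fiber_sumElim (A C : Fin k → Fin n) (j : Fin n) :
    ((univ.filter fun x => Sum.elim A C x = j).filter fun x => x.isLeft = true).card =
      (ctM n k A).1 j := by
  have : ((univ.filter fun x => Sum.elim A C x = j).filter fun x => x.isLeft = true) =
      (univ.filter fun r => A r = j).map Function.Embedding.inl := by
    ext x
    cases x <;> simp
  rw [this, card_map]
  rfl

theorem card_filter_isRight_fiber_sumElim (A C : Fin k → Fin n) (j : Fin n) :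
    ((univ.filter fun x => Sum.elim A C x = j).filter fun x => x.isRight = true).card =
      (ctM n k C).1 j := by
  have : ((univ.filter fun x => Sum.elim A C x = j).filter fun x => x.isRight = true) =
      (univ.filter fun s => C s = j).map Function.Embedding.inr := by
    ext x
    cases x <;> simp
  rw [this, card_map]
  rfl

theorem image_sumElim_eq_filter (A C : Fin k → Fin n) :
    univ.image (Sum.elim A C) =
      univ.filter fun j => ((ctM n k A).1 j, (ctM n k C).1 j) ≠ (0, 0) := by
  ext j
  simp [ctM, filter_eq_empty_iff, Sum.exists, or_iff_not_and_not]

theorem blockTypeP_kerPartition_sumElim (A C : Fin k → Fin n) :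
    blockTypeP (kerPartition (Sum.elim A C)) = Epairs (ctM n k A) (ctM n k C) := by
  rw [blockTypeP, (isKerPartition_kerPartition _).parts_val, Multiset.map_map,
    image_sumElim_eq_filter, epairs_eq_map]
  congr 1
  funext j
  simp only [Function.comp_apply, card_filter_isLeft_fiber_sumElim,
    card_filter_isRight_fiber_sumElim]

theorem prod_factorial_snd_epairs (a b : Mnk n k) :
    ((Epairs a b).map fun p => (p.2)!).prod = ∏ j, (b.1 j)! := by
  rw [epairs_eq_map, Multiset.map_map]
  refine prod_filter_of_ne fun j _ hj => ?_
  have : b.1 j ≠ 0 := fun h0 => hj (by simp [h0])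
  simp [this]

end Contents

section Operators

variable (F : Type) [Field F] {n k : ℕ} (m : Multiset (ℕ × ℕ))

theorem Tm_piOp_apply (f : (Fin k → Fin n) → F) (b : Mnk n k) :
    Tm F n k m (piOp F n k f) b = ∑ A, if Epairs (ctM n k A) b = m then f A else 0 := by
  simp only [Tm, piOp, LinearMap.coe_mk, AddHom.coe_mk]
  rw [← Finset.sum_fiberwise univ (ctM n k)]
  refine sum_congr rfl fun a _ => ?_
  split_ifs with h
  · rw [sum_filter]
    refine sum_congr rfl fun A _ => ?_
    split_ifs with hA <;> simp_all
  · refine (sum_eq_zero fun A hA => ?_).symm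
    rw [(mem_filter.1 hA).2, if_neg h]

theorem sum_xdOp_apply (f : (Fin k → Fin n) → F) (C : Fin k → Fin n) :
    (∑ d : {d : Finpartition (univ : Finset (Fin k ⊕ Fin k)) // blockTypeP d = m},
        xdOp F n k d.1) f C =
      ∑ A, if Epairs (ctM n k A) (ctM n k C) = m then f A else 0 := by
  simp only [LinearMap.sum_apply, Finset.sum_apply, xdOp, LinearMap.coe_mk, AddHom.coe_mk]
  rw [sum_comm]
  refine sum_congr rfl fun A _ => ?_
  have hker : ∀ d : Finpartition (univ : Finset (Fin k ⊕ Fin k)),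
      (∀ x y, Sum.elim A C x = Sum.elim A C y ↔ ∃ B ∈ d.parts, x ∈ B ∧ y ∈ B) ↔
        d = kerPartition (Sum.elim A C) :=
    fun d => isKerPartition_iff_eq
  simp_rw [hker]
  rw [← sum_subtype (univ.filter (blockTypeP · = m)) (by simp)
    (fun d => if d = _ then f A else 0), sum_ite_eq']
  simp [blockTypeP_kerPartition_sumElim]

theorem prod_factorial_div_factorial_eq_inv_of_epairs_eq {a b : Mnk n k} (hm : Epairs a b = m) :
    ((∏ j, (b.1 j)! : ℕ) : F) / (k ! : F) =
      ((k ! : F) / (m.map fun p => (((p.2)! : ℕ) : F)).prod)⁻¹ := by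
  rw [inv_div, ← hm, ← prod_factorial_snd_epairs a b, Nat.cast_multiset_prod, Multiset.map_map]
  rfl

end Operators

theorem stmt7_general (F : Type) [Field F] (n k : ℕ) (m : Multiset (ℕ × ℕ)) :
    tauOp F n k ∘ₗ Tm F n k m ∘ₗ piOp F n k =
      ((Nat.factorial k : F) / ((m.map fun p => ((Nat.factorial p.2 : ℕ) : F)).prod))⁻¹ •
        ∑ d : {d : Finpartition (Finset.univ : Finset (Fin k ⊕ Fin k)) //
            blockTypeP d = m}, xdOp F n k d.1 := by
  refine LinearMap.ext fun f => funext fun C => ?_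
  rw [LinearMap.smul_apply, Pi.smul_apply, sum_xdOp_apply, smul_eq_mul, mul_sum]
  simp only [LinearMap.comp_apply, tauOp, LinearMap.coe_mk, AddHom.coe_mk]
  rw [Tm_piOp_apply, mul_sum]
  refine sum_congr rfl fun A _ => ?_
  split_ifs with h
  · rw [prod_factorial_div_factorial_eq_inv_of_epairs_eq F m h]
  · simp

/-- For every multiset partition `m` of `{1^k,1'^k}` of rank at most `n`:
`τ_k ∘ T_m ∘ π_k = (1/α_m) Σ_d x_d`, the sum over all set partitions `d` of
`{1,…,k} ⊔ {1',…,k'}` of block-type `m`, where `α_m = k!/∏_{(p,q)∈m} q!`. -/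
theorem stmt7 (F : Type) [Field F] (n k : ℕ) (hn : 0 < n) (hk : 0 < k)
    (m : Multiset (ℕ × ℕ)) (hm : IsMSP k m) (hrank : Multiset.card m ≤ n) :
    tauOp F n k ∘ₗ Tm F n k m ∘ₗ piOp F n k =
      ((Nat.factorial k : F) / ((m.map fun p => ((Nat.factorial p.2 : ℕ) : F)).prod))⁻¹ •
        ∑ d : {d : Finpartition (Finset.univ : Finset (Fin k ⊕ Fin k)) //
            blockTypeP d = m}, xdOp F n k d.1 :=
  stmt7_general F n k m
end

section
/- The family {T_m}, indexed by the multiset partitions m of {1^{λ_1},…,s^{λ_s},1'^{λ_1},…,s'^{λ_s}} of rank at most n, is a basis of the F-vector space of S_n-equivariant linear endomorphisms of F[M(n,λ)] (≅ End_{S_n}(Sym^λ(F^n))). -/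
/-- `M(n,λ)`: `s × n` matrices of non-negative integers whose `i`-th row sums to `λ_i`,
encoded row by row. -/
abbrev Mlam (n : ℕ) {s : ℕ} (lam : Fin s → ℕ) : Type := (i : Fin s) → Mnk n (lam i)

/-- The multiset of column pairs `{(A^{(j)}, B^{(j)}) : 1 ≤ j ≤ n}` of a pair of matrices
`A, B ∈ M(n,λ)`. -/
def colEfull {n s : ℕ} {lam : Fin s → ℕ} (A B : Mlam n lam) :
    Multiset ((Fin s → ℕ) × (Fin s → ℕ)) :=
  Multiset.map (fun j => (fun i => (A i).1 j, fun i => (B i).1 j)) Finset.univ.val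

/-- `E(A,B)`: the multiset of column pairs of `(A, B)` with all copies of the zero pair
removed. -/
def Elam {n s : ℕ} {lam : Fin s → ℕ} (A B : Mlam n lam) :
    Multiset ((Fin s → ℕ) × (Fin s → ℕ)) :=
  (colEfull A B).filter fun p => p ≠ (0, 0)

/-- A multiset partition of `{1^{λ_1},…,s^{λ_s},1'^{λ_1},…,s'^{λ_s}}`, encoded as a
multiset of pairs `(I,J)` of vectors in `ℤ_{≥0}^s`, each pair `≠ (0,0)`, with the `I`'s
summing to `λ` and the `J`'s summing to `λ`. -/
def IsMSPlam {s : ℕ} (lam : Fin s → ℕ)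
    (m : Multiset ((Fin s → ℕ) × (Fin s → ℕ))) : Prop :=
  ((0, 0) : (Fin s → ℕ) × (Fin s → ℕ)) ∉ m ∧
    (m.map Prod.fst).sum = lam ∧ (m.map Prod.snd).sum = lam

/-- The action of `w ∈ S_n` on `M(n,λ)` by permuting columns: `(w • A)_{ij} = A_{i,w⁻¹(j)}`. -/
def permMl {n s : ℕ} {lam : Fin s → ℕ} (w : Equiv.Perm (Fin n)) (A : Mlam n lam) :
    Mlam n lam := fun i => permA w (A i)

/-- The integral operator `T_m` on `F[M(n,λ)]`, determined by
`T_m(1_A) = Σ_{B : E(A,B) = m} 1_B`. -/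
def Tml (F : Type) [Field F] (n : ℕ) {s : ℕ} (lam : Fin s → ℕ)
    (m : Multiset ((Fin s → ℕ) × (Fin s → ℕ))) :
    Module.End F (Mlam n lam → F) where
  toFun f B := ∑ A : Mlam n lam, if Elam A B = m then f A else 0
  map_add' f g := by
    funext B
    simp only [Pi.add_apply]
    rw [← Finset.sum_add_distrib]
    refine Finset.sum_congr rfl fun A _ => ?_
    by_cases h : Elam A B = m <;> simp [h]
  map_smul' c f := by
    funext B
    simp only [RingHom.id_apply, Pi.smul_apply, smul_eq_mul]
    rw [Finset.mul_sum]
    refine Finset.sum_congr rfl fun A _ => ?_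
    by_cases h : Elam A B = m <;> simp [h]

/-- The space of `S_n`-equivariant linear endomorphisms of `F[M(n,λ)] ≅ Sym^λ(F^n)`. -/
def EquivariantEndLam (F : Type) [Field F] (n : ℕ) {s : ℕ} (lam : Fin s → ℕ) :
    Submodule F (Module.End F (Mlam n lam → F)) where
  carrier := {T | ∀ (w : Equiv.Perm (Fin n)) (f : Mlam n lam → F) (A : Mlam n lam),
    T (fun X => f (permMl w X)) A = T f (permMl w A)}
  add_mem' := fun hT hS w f A => by
    simp only [LinearMap.add_apply, Pi.add_apply]
    rw [hT w f A, hS w f A]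
  zero_mem' := fun w f A => by simp
  smul_mem' := fun c T hT w f A => by
    simp only [LinearMap.smul_apply, Pi.smul_apply]
    rw [hT w f A]

open Finset

namespace Multiset

variable {α : Type*}

theorem filter_ne_add_replicate_count_s10 [DecidableEq α] (s : Multiset α) (a : α) :
    s.filter (· ≠ a) + replicate (s.count a) a = s := by
  conv_rhs => rw [← s.filter_add_not (· ≠ a)]
  simp only [not_not, filter_eq']

theorem sum_filter_ne_zero {M : Type*} [AddCommMonoid M] [DecidableEq M] (s : Multiset M) :
    (s.filter (· ≠ 0)).sum = s.sum := by
  conv_rhs => rw [← s.filter_ne_add_replicate_count_s10 0]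
  simp

theorem eq_of_card_eq_of_filter_ne_eq [DecidableEq α] {s t : Multiset α} {a : α}
    (hc : card s = card t) (hf : s.filter (· ≠ a) = t.filter (· ≠ a)) : s = t := by
  have hcount : s.count a = t.count a := by
    have hs := congrArg card (s.filter_ne_add_replicate_count_s10 a)
    have ht := congrArg card (t.filter_ne_add_replicate_count_s10 a)
    simp only [card_add, card_replicate, hf] at hs ht
    omega
  rw [← s.filter_ne_add_replicate_count_s10 a, ← t.filter_ne_add_replicate_count_s10 a, hf, hcount]

theorem exists_map_univ_eq {n : ℕ} (M : Multiset α) (hM : card M = n) :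
    ∃ f : Fin n → α, map f univ.val = M := by
  obtain ⟨l, rfl⟩ : ∃ l : List α, (l : Multiset α) = M := Quotient.exists_rep M
  rw [coe_card] at hM
  subst hM
  exact ⟨l.get, by rw [Fin.univ_val_map, List.ofFn_get]⟩

theorem exists_perm_comp_eq_of_map_univ_eq {ι : Type*} [Fintype ι] {f g : ι → α}
    (h : map f univ.val = map g univ.val) : ∃ σ : Equiv.Perm ι, g = f ∘ σ := by
  classical
  have hfiber : ∀ a, Fintype.card {i // g i = a} = Fintype.card {i // f i = a} := by
    intro a
    simpa [count_map, Fintype.card_subtype, Finset.card_def, Finset.filter_val, eq_comm] using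
      (congrArg (count a) h).symm
  exact ⟨Equiv.ofFiberEquiv fun a => Fintype.equivOfCardEq (hfiber a),
    funext fun i => (Equiv.ofFiberEquiv_map _ i).symm⟩

end Multiset

section

variable {n s : ℕ} {lam : Fin s → ℕ}

theorem isMSPlam_iff (m : Multiset ((Fin s → ℕ) × (Fin s → ℕ))) :
    IsMSPlam lam m ↔ (0, 0) ∉ m ∧ m.sum = (lam, lam) := by
  rw [IsMSPlam, ← Multiset.fst_sum, ← Multiset.snd_sum, Prod.ext_iff]

theorem card_colEfull (A B : Mlam n lam) : Multiset.card (colEfull A B) = n := by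
  simp [colEfull]

theorem sum_colEfull (A B : Mlam n lam) : (colEfull A B).sum = (lam, lam) := by
  rw [colEfull, Finset.sum_map_val]
  ext i
  · rw [Prod.fst_sum, Finset.sum_apply]
    exact (A i).2
  · rw [Prod.snd_sum, Finset.sum_apply]
    exact (B i).2

theorem colEfull_permMl (w : Equiv.Perm (Fin n)) (A B : Mlam n lam) :
    colEfull (permMl w A) (permMl w B) = colEfull A B := by
  conv_rhs => rw [colEfull, ← Multiset.map_univ_val_equiv w⁻¹, Multiset.map_map]
  rfl

theorem Elam_permMl (w : Equiv.Perm (Fin n)) (A B : Mlam n lam) :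
    Elam (permMl w A) (permMl w B) = Elam A B := by
  rw [Elam, Elam, colEfull_permMl]

theorem isMSPlam_Elam (A B : Mlam n lam) : IsMSPlam lam (Elam A B) := by
  refine (isMSPlam_iff _).2 ⟨fun h => (Multiset.of_mem_filter h) rfl, ?_⟩
  rw [Elam, Prod.mk_zero_zero, Multiset.sum_filter_ne_zero, sum_colEfull]

theorem card_Elam_le (A B : Mlam n lam) : Multiset.card (Elam A B) ≤ n :=
  (Multiset.card_le_card (Multiset.filter_le _ _)).trans_eq (card_colEfull A B)

theorem colEfull_eq_of_Elam_eq {A B A' B' : Mlam n lam} (h : Elam A B = Elam A' B') :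
    colEfull A B = colEfull A' B' :=
  Multiset.eq_of_card_eq_of_filter_ne_eq (by rw [card_colEfull, card_colEfull]) h

theorem exists_permMl_of_colEfull_eq {A B A' B' : Mlam n lam}
    (h : colEfull A B = colEfull A' B') :
    ∃ w : Equiv.Perm (Fin n), permMl w A = A' ∧ permMl w B = B' := by
  obtain ⟨σ, hσ⟩ := Multiset.exists_perm_comp_eq_of_map_univ_eq h
  refine ⟨σ⁻¹, ?_, ?_⟩ <;> ext i j
  · exact (congrFun (congrArg Prod.fst (congrFun hσ j)) i).symm
  · exact (congrFun (congrArg Prod.snd (congrFun hσ j)) i).symm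

theorem exists_Elam_eq {m : Multiset ((Fin s → ℕ) × (Fin s → ℕ))} (hm : IsMSPlam lam m)
    (hcard : Multiset.card m ≤ n) : ∃ A B : Mlam n lam, Elam A B = m := by
  rw [isMSPlam_iff] at hm
  obtain ⟨f, hf⟩ :=
    Multiset.exists_map_univ_eq (n := n) (m + Multiset.replicate (n - m.card) (0, 0)) (by
      rw [Multiset.card_add, Multiset.card_replicate]; omega)
  have hsum : ∑ j, f j = (lam, lam) := by
    rw [← Finset.sum_map_val, hf, Multiset.sum_add, Multiset.sum_replicate, hm.2,
      Prod.mk_zero_zero, smul_zero, add_zero]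
  refine ⟨fun i => ⟨fun j => (f j).1 i, ?_⟩, fun i => ⟨fun j => (f j).2 i, ?_⟩, ?_⟩
  · rw [← Finset.sum_apply, ← Prod.fst_sum, hsum]
  · rw [← Finset.sum_apply, ← Prod.snd_sum, hsum]
  · change Multiset.filter _ (Multiset.map f univ.val) = m
    rw [hf, Multiset.filter_add,
      Multiset.filter_eq_self.2 fun _ hp => ne_of_mem_of_not_mem hp hm.1,
      Multiset.filter_eq_nil.2 fun p hp => not_not.2 (Multiset.eq_of_mem_replicate hp), add_zero]

end

abbrev MSPlam (n : ℕ) {s : ℕ} (lam : Fin s → ℕ) : Type :=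
  {m : Multiset ((Fin s → ℕ) × (Fin s → ℕ)) // IsMSPlam lam m ∧ Multiset.card m ≤ n}

namespace MSPlam

variable {n s : ℕ} {lam : Fin s → ℕ}

def ofPair (A B : Mlam n lam) : MSPlam n lam :=
  ⟨Elam A B, isMSPlam_Elam A B, card_Elam_le A B⟩

theorem ofPair_surjective :
    Function.Surjective fun p : Mlam n lam × Mlam n lam => ofPair p.1 p.2 := by
  rintro ⟨m, hm, hcard⟩
  obtain ⟨A, B, h⟩ := exists_Elam_eq hm hcard
  exact ⟨(A, B), Subtype.ext h⟩

instance : Fintype (MSPlam n lam) := Fintype.ofSurjective _ ofPair_surjective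

noncomputable def rep (m : MSPlam n lam) : Mlam n lam × Mlam n lam :=
  Function.surjInv ofPair_surjective m

theorem Elam_rep (m : MSPlam n lam) : Elam (rep m).1 (rep m).2 = m.1 :=
  congrArg Subtype.val (Function.surjInv_eq ofPair_surjective m)

end MSPlam

section

variable {F : Type} [Field F] {n s : ℕ} {lam : Fin s → ℕ}

def permMlEquiv (w : Equiv.Perm (Fin n)) : Mlam n lam ≃ Mlam n lam where
  toFun := permMl w
  invFun := permMl w⁻¹
  left_inv A := by ext; simp [permMl, permA]
  right_inv A := by ext; simp [permMl, permA]

theorem permMl_injective (w : Equiv.Perm (Fin n)) : Function.Injective (permMl (lam := lam) w) :=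
  (permMlEquiv w).injective

theorem Tml_mem_equivariantEndLam (m : Multiset ((Fin s → ℕ) × (Fin s → ℕ))) :
    Tml F n lam m ∈ EquivariantEndLam F n lam := fun w f A =>
  Fintype.sum_equiv (permMlEquiv w) _ _ fun A' => by
    simp only [permMlEquiv, Equiv.coe_fn_mk, Elam_permMl]

theorem toMatrix'_Tml (m : Multiset ((Fin s → ℕ) × (Fin s → ℕ))) (A B : Mlam n lam) :
    LinearMap.toMatrix' (Tml F n lam m) B A = if Elam A B = m then 1 else 0 := by
  rw [LinearMap.toMatrix'_apply, Tml, LinearMap.coe_mk, AddHom.coe_mk,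
    Finset.sum_eq_single A (fun A' _ h => by simp [h]) (by simp)]
  simp

theorem toMatrix'_sum_smul_Tml (g : MSPlam n lam → F) (A B : Mlam n lam) :
    LinearMap.toMatrix' (∑ m, g m • Tml F n lam m.1) B A = g (MSPlam.ofPair A B) := by
  simp only [map_sum, map_smul, Matrix.sum_apply, Matrix.smul_apply, toMatrix'_Tml,
    smul_eq_mul, mul_ite, mul_one, mul_zero]
  rw [Finset.sum_eq_single_of_mem (MSPlam.ofPair A B) (Finset.mem_univ _)
    fun m _ hm => if_neg fun h => hm (Subtype.ext h.symm)]
  exact if_pos rfl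

theorem toMatrix'_permMl {T : Module.End F (Mlam n lam → F)}
    (hT : T ∈ EquivariantEndLam F n lam) (w : Equiv.Perm (Fin n)) (A B : Mlam n lam) :
    LinearMap.toMatrix' T (permMl w B) (permMl w A) = LinearMap.toMatrix' T B A := by
  rw [LinearMap.toMatrix'_apply, LinearMap.toMatrix'_apply, ← hT w]
  refine congrArg (fun f => T f B) (funext fun X => ?_)
  simp only [Pi.single_apply, (permMl_injective w).eq_iff]

theorem toMatrix'_eq_of_Elam_eq {T : Module.End F (Mlam n lam → F)}
    (hT : T ∈ EquivariantEndLam F n lam) {A B A' B' : Mlam n lam}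
    (h : Elam A B = Elam A' B') :
    LinearMap.toMatrix' T B A = LinearMap.toMatrix' T B' A' := by
  obtain ⟨w, rfl, rfl⟩ := exists_permMl_of_colEfull_eq (colEfull_eq_of_Elam_eq h)
  exact (toMatrix'_permMl hT w A B).symm

def TmlEquivariant (m : MSPlam n lam) : EquivariantEndLam F n lam :=
  ⟨Tml F n lam m.1, Tml_mem_equivariantEndLam m.1⟩

theorem eq_sum_smul_Tml {T : Module.End F (Mlam n lam → F)}
    (hT : T ∈ EquivariantEndLam F n lam) :
    T = ∑ m, LinearMap.toMatrix' T (MSPlam.rep m).2 (MSPlam.rep m).1 • Tml F n lam m.1 := by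
  apply LinearMap.toMatrix'.injective
  ext B A
  rw [toMatrix'_sum_smul_Tml]
  exact toMatrix'_eq_of_Elam_eq hT (MSPlam.Elam_rep (MSPlam.ofPair A B)).symm

theorem linearIndependent_Tml :
    LinearIndependent F fun m : MSPlam n lam => Tml F n lam m.1 := by
  refine Fintype.linearIndependent_iff.2 fun g hg m => ?_
  obtain ⟨⟨A, B⟩, rfl⟩ := MSPlam.ofPair_surjective m
  simpa only [toMatrix'_sum_smul_Tml, map_zero, Matrix.zero_apply] using
    congrArg (fun T => LinearMap.toMatrix' T B A) hg

theorem linearIndependent_TmlEquivariant :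
    LinearIndependent F (TmlEquivariant (F := F) (n := n) (lam := lam)) :=
  LinearIndependent.of_comp (EquivariantEndLam F n lam).subtype linearIndependent_Tml

theorem span_TmlEquivariant :
    ⊤ ≤ Submodule.span F (Set.range (TmlEquivariant (F := F) (n := n) (lam := lam))) := by
  rintro ⟨T, hT⟩ -
  have hsum : (⟨T, hT⟩ : EquivariantEndLam F n lam) =
      ∑ m, LinearMap.toMatrix' T (MSPlam.rep m).2 (MSPlam.rep m).1 • TmlEquivariant m :=
    Subtype.ext (by simpa [TmlEquivariant] using eq_sum_smul_Tml hT)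
  rw [hsum]
  exact Submodule.sum_mem _ fun m _ => Submodule.smul_mem _ _ (Submodule.subset_span ⟨m, rfl⟩)

end

theorem stmt10_general (F : Type) [Field F] (n : ℕ) {s : ℕ} (lam : Fin s → ℕ) :
    ∃ B : Module.Basis {m : Multiset ((Fin s → ℕ) × (Fin s → ℕ)) //
        IsMSPlam lam m ∧ Multiset.card m ≤ n} F (EquivariantEndLam F n lam),
      ∀ m, (B m : Module.End F (Mlam n lam → F)) = Tml F n lam m.1 :=
  ⟨Module.Basis.mk linearIndependent_TmlEquivariant span_TmlEquivariant, fun m => by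
    rw [Module.Basis.mk_apply]
    rfl⟩

/-- The family `{T_m}`, indexed by the multiset partitions `m` of
`{1^{λ_1},…,s^{λ_s},1'^{λ_1},…,s'^{λ_s}}` of rank at most `n`, is a basis of the space of
`S_n`-equivariant linear endomorphisms of `F[M(n,λ)] ≅ Sym^λ(F^n)`. -/
theorem stmt10 (F : Type) [Field F] (n : ℕ) (hn : 0 < n) {s : ℕ} (lam : Fin s → ℕ) :
    ∃ B : Module.Basis {m : Multiset ((Fin s → ℕ) × (Fin s → ℕ)) //
        IsMSPlam lam m ∧ Multiset.card m ≤ n} F (EquivariantEndLam F n lam),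
      ∀ m, (B m : Module.End F (Mlam n lam → F)) = Tml F n lam m.1 :=
  stmt10_general F n lam
end

section
/- Let m_1 and m_2 be balanced multiset partitions of {1^{λ_1},…,s^{λ_s},1'^{λ_1},…,s'^{λ_s}} of rank at most n, and write T_{m_1} ∘ T_{m_2} = Σ_m α_m T_m with α_m = |{B ∈ M(n,λ) : E(A,B) = m_2 and E(B,C) = m_1}| for any A,C with E(A,C) = m. Then: (1) every m with α_m ≠ 0 is balanced; and (2) for balanced m_1, m_2, m, the structure constant α_m is independent of n, i.e., it takes the same value for every positive integer n for which A, C ∈ M(n,λ) with E(A,C) = m exist. -/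
/-- A multiset `m` of pairs `(I,J)` of vectors is balanced if every pair satisfies
`|I| = |J|`, where `|I|` is the sum of the entries of `I`. -/
def BalancedM {s : ℕ} (m : Multiset ((Fin s → ℕ) × (Fin s → ℕ))) : Prop :=
  ∀ p ∈ m, (∑ i, p.1 i) = ∑ i, p.2 i

-- my defs
def colp {n s : ℕ} {lam : Fin s → ℕ} (A B : Mlam n lam) (j : Fin n) :
    (Fin s → ℕ) × (Fin s → ℕ) :=
  (fun i => (A i).1 j, fun i => (B i).1 j)

lemma elam_eq' {n s : ℕ} {lam : Fin s → ℕ} (A B : Mlam n lam) :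
    Elam A B = (Multiset.map (colp A B) Finset.univ.val).filter (fun p => p ≠ (0,0)) := rfl

lemma count_elam {n s : ℕ} {lam : Fin s → ℕ} (A B : Mlam n lam)
    {c : (Fin s → ℕ) × (Fin s → ℕ)} (hc : c ≠ (0,0)) :
    Multiset.count c (Elam A B) = Nat.card {j : Fin n // colp A B j = c} := by
  classical
  rw [elam_eq', Multiset.count_filter_of_pos (p := fun p => p ≠ (0,0)) hc, Multiset.count_map]
  rw [Nat.card_eq_fintype_card, Fintype.card_subtype]
  simp only [eq_comm]
  rfl

lemma colsum_eq {n s : ℕ} {lam : Fin s → ℕ} (A B : Mlam n lam)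
    (h : BalancedM (Elam A B)) (j : Fin n) :
    ∑ i, (A i).1 j = ∑ i, (B i).1 j := by
  by_cases hc : colp A B j = (0,0)
  · have h1 : ∀ i, (A i).1 j = 0 := fun i => congrFun (congrArg Prod.fst hc) i
    have h2 : ∀ i, (B i).1 j = 0 := fun i => congrFun (congrArg Prod.snd hc) i
    simp [h1, h2]
  · have hm : colp A B j ∈ Elam A B := by
      rw [elam_eq', Multiset.mem_filter]
      exact ⟨Multiset.mem_map.2 ⟨j, Finset.mem_univ_val j, rfl⟩, hc⟩
    exact h _ hm

lemma exists_equiv_of_card_fiber_eq {α β γ : Type*} [Finite α] [Finite β]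
    (f : α → γ) (g : β → γ)
    (h : ∀ c, Nat.card {a // f a = c} = Nat.card {b // g b = c}) :
    ∃ e : α ≃ β, ∀ a, g (e a) = f a := by
  classical
  have F : ∀ c, {a // f a = c} ≃ {b // g b = c} := by
    intro c
    have : Fintype α := Fintype.ofFinite α
    have : Fintype β := Fintype.ofFinite β
    apply Fintype.equivOfCardEq
    rw [← Nat.card_eq_fintype_card, ← Nat.card_eq_fintype_card]
    exact h c
  exact ⟨Equiv.ofFiberEquiv F, Equiv.ofFiberEquiv_map F⟩

lemma elam_eq_of_equiv {n n' s : ℕ} {lam : Fin s → ℕ}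
    (U V : Mlam n lam) (U' V' : Mlam n' lam)
    {P : Fin n → Prop} {P' : Fin n' → Prop}
    (e : {j // P j} ≃ {j' // P' j'})
    (he : ∀ x : {j // P j}, colp U' V' (e x).1 = colp U V x.1)
    (hz : ∀ j, ¬ P j → colp U V j = (0,0))
    (hz' : ∀ j', ¬ P' j' → colp U' V' j' = (0,0)) :
    Elam U' V' = Elam U V := by
  classical
  ext c
  by_cases hc : c = (0,0)
  · subst hc
    rw [elam_eq', elam_eq', Multiset.count_filter_of_neg (by simp),
      Multiset.count_filter_of_neg (by simp)]
  · rw [count_elam _ _ hc, count_elam _ _ hc]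
    have hP' : ∀ x : {j' : Fin n' // colp U' V' j' = c}, P' x.1 := by
      intro x
      by_contra hp
      exact hc (x.2 ▸ hz' x.1 hp)
    have hP : ∀ x : {j : Fin n // colp U V j = c}, P x.1 := by
      intro x
      by_contra hp
      exact hc (x.2 ▸ hz x.1 hp)
    apply Nat.card_congr
    have key1 : ∀ (z : {j' // P' j'}) (h : P (e.symm z).1),
        (e ⟨(e.symm z).1, h⟩).1 = z.1 := by
      intro z h
      rw [show (⟨(e.symm z).1, h⟩ : {j // P j}) = e.symm z from Subtype.ext rfl,
        Equiv.apply_symm_apply]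
    have key2 : ∀ (z : {j // P j}) (h : P' (e z).1),
        (e.symm ⟨(e z).1, h⟩).1 = z.1 := by
      intro z h
      rw [show (⟨(e z).1, h⟩ : {j' // P' j'}) = e z from Subtype.ext rfl,
        Equiv.symm_apply_apply]
    refine ⟨fun x => ⟨(e.symm ⟨x.1, hP' x⟩).1, ?_⟩,
            fun x => ⟨(e ⟨x.1, hP x⟩).1, ?_⟩, ?_, ?_⟩
    · have h1 := he (e.symm ⟨x.1, hP' x⟩)
      rw [Equiv.apply_symm_apply] at h1
      exact h1.symm.trans x.2
    · exact (he ⟨x.1, hP x⟩).trans x.2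
    · intro x
      exact Subtype.ext (key1 _ _)
    · intro x
      exact Subtype.ext (key2 _ _)

lemma card_le_aux {n n' s : ℕ} {lam : Fin s → ℕ}
    (m1 m2 : Multiset ((Fin s → ℕ) × (Fin s → ℕ)))
    (hb1 : BalancedM m1) (hb2 : BalancedM m2)
    (A C : Mlam n lam) (A' C' : Mlam n' lam)
    (hE : Elam A C = Elam A' C') :
    Nat.card {B : Mlam n lam // Elam A B = m2 ∧ Elam B C = m1} ≤
    Nat.card {B : Mlam n' lam // Elam A' B = m2 ∧ Elam B C' = m1} := by
  classical
  set P : Fin n → Prop := fun j => colp A C j ≠ (0,0) with hPdef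
  set P' : Fin n' → Prop := fun j' => colp A' C' j' ≠ (0,0) with hP'def
  have hfib : ∀ c, Nat.card {x : {j // P j} // colp A C x.1 = c} =
      Nat.card {x : {j' // P' j'} // colp A' C' x.1 = c} := by
    intro c
    by_cases hc : c = (0,0)
    · subst hc
      haveI : IsEmpty {x : {j // P j} // colp A C x.1 = (0,0)} := ⟨fun x => x.1.2 x.2⟩
      haveI : IsEmpty {x : {j' // P' j'} // colp A' C' x.1 = (0,0)} := ⟨fun x => x.1.2 x.2⟩
      simp
    · have e1 : {x : {j // P j} // colp A C x.1 = c} ≃ {j : Fin n // colp A C j = c} :=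
        ⟨fun x => ⟨x.1.1, x.2⟩, fun j => ⟨⟨j.1, fun h0 => hc (j.2.symm.trans h0)⟩, j.2⟩,
          fun x => Subtype.ext (Subtype.ext rfl), fun j => Subtype.ext rfl⟩
      have e2 : {x : {j' // P' j'} // colp A' C' x.1 = c} ≃ {j : Fin n' // colp A' C' j = c} :=
        ⟨fun x => ⟨x.1.1, x.2⟩, fun j => ⟨⟨j.1, fun h0 => hc (j.2.symm.trans h0)⟩, j.2⟩,
          fun x => Subtype.ext (Subtype.ext rfl), fun j => Subtype.ext rfl⟩
      rw [Nat.card_congr e1, Nat.card_congr e2, ← count_elam A C hc, ← count_elam A' C' hc, hE]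
  obtain ⟨e, hec⟩ := exists_equiv_of_card_fiber_eq
      (fun x : {j // P j} => colp A C x.1) (fun x : {j' // P' j'} => colp A' C' x.1) hfib
  -- vanishing of B off P
  have hBz : ∀ (B : Mlam n lam), Elam A B = m2 → Elam B C = m1 →
      ∀ j, ¬ P j → ∀ i, (B i).1 j = 0 := by
    intro B h2 h1 j hj i
    have hj' : colp A C j = (0,0) := not_not.mp hj
    have hA0 : ∀ i, (A i).1 j = 0 := fun i => congrFun (congrArg Prod.fst hj') i
    have hsum : ∑ i, (A i).1 j = ∑ i, (B i).1 j :=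
      colsum_eq A B (by rw [h2]; exact hb2) j
    have h0 : ∑ i, (B i).1 j = 0 := by rw [← hsum]; simp [hA0]
    exact (Finset.sum_eq_zero_iff).mp h0 i (Finset.mem_univ i)
  -- the transported matrix entries
  set bcol : Mlam n lam → Fin n' → Fin s → ℕ :=
    fun B j' i => if h : P' j' then (B i).1 (e.symm ⟨j', h⟩).1 else 0 with hbcoldef
  have hbcol_e : ∀ (B : Mlam n lam) (x : {j // P j}) (i : Fin s),
      bcol B (e x).1 i = (B i).1 x.1 := by
    intro B x i
    have hP'ex : P' (e x).1 := fun h0 => x.2 ((hec x).symm.trans h0)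
    have step : e.symm ⟨(e x).1, hP'ex⟩ = x := by
      rw [show (⟨(e x).1, hP'ex⟩ : {j' // P' j'}) = e x from Subtype.ext rfl]
      exact e.symm_apply_apply x
    rw [hbcoldef]
    simp only []
    rw [dif_pos hP'ex, step]
  -- row sums
  have hrow : ∀ (B : Mlam n lam), Elam A B = m2 → Elam B C = m1 →
      ∀ i, ∑ j', bcol B j' i = lam i := by
    intro B h2 h1 i
    have s1 : ∑ j', bcol B j' i = ∑ j' ∈ Finset.univ.filter P', bcol B j' i :=
      (Finset.sum_subset (Finset.filter_subset _ _)
        (fun j' _ hj' => dif_neg (by simpa using hj'))).symm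
    have s2 : ∑ j' ∈ Finset.univ.filter P', bcol B j' i
        = ∑ x' : {j' // P' j'}, bcol B x'.1 i :=
      Finset.sum_subtype _ (by simp) _
    have s3 : ∑ x' : {j' // P' j'}, bcol B x'.1 i
        = ∑ x' : {j' // P' j'}, (B i).1 (e.symm x').1 :=
      Finset.sum_congr rfl (fun x' _ => dif_pos x'.2)
    have s4 : ∑ x' : {j' // P' j'}, (B i).1 (e.symm x').1
        = ∑ x : {j // P j}, (B i).1 x.1 :=
      e.symm.sum_comp (fun x => (B i).1 x.1)
    have s5 : ∑ x : {j // P j}, (B i).1 x.1 = ∑ j ∈ Finset.univ.filter P, (B i).1 j :=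
      (Finset.sum_subtype _ (by simp) _).symm
    have s6 : ∑ j ∈ Finset.univ.filter P, (B i).1 j = ∑ j, (B i).1 j :=
      Finset.sum_subset (Finset.filter_subset _ _)
        (fun j _ hj => hBz B h2 h1 j (by simpa using hj) i)
    rw [s1, s2, s3, s4, s5, s6]
    exact (B i).2
  -- the map
  let Φ : {B : Mlam n lam // Elam A B = m2 ∧ Elam B C = m1} →
      {B : Mlam n' lam // Elam A' B = m2 ∧ Elam B C' = m1} := by
    intro ⟨B, h2, h1⟩
    refine ⟨fun i => ⟨fun j' => bcol B j' i, hrow B h2 h1 i⟩, ?_, ?_⟩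
    · rw [← h2]
      refine elam_eq_of_equiv A B A' _ e ?_ ?_ ?_
      · intro x
        refine Prod.ext (funext fun i => ?_) (funext fun i => ?_)
        · exact congrFun (congrArg Prod.fst (hec x)) i
        · exact hbcol_e B x i
      · intro j hj
        have hj' : colp A C j = (0,0) := not_not.mp hj
        refine Prod.ext (funext fun i => ?_) (funext fun i => ?_)
        · exact congrFun (congrArg Prod.fst hj') i
        · exact hBz B h2 h1 j hj i
      · intro j' hj'
        have hj'' : colp A' C' j' = (0,0) := not_not.mp hj'
        refine Prod.ext (funext fun i => ?_) (funext fun i => ?_)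
        · exact congrFun (congrArg Prod.fst hj'') i
        · exact dif_neg hj' 
    · rw [← h1]
      refine elam_eq_of_equiv B C _ C' e ?_ ?_ ?_
      · intro x
        refine Prod.ext (funext fun i => ?_) (funext fun i => ?_)
        · exact hbcol_e B x i
        · exact congrFun (congrArg Prod.snd (hec x)) i
      · intro j hj
        have hj' : colp A C j = (0,0) := not_not.mp hj
        refine Prod.ext (funext fun i => ?_) (funext fun i => ?_)
        · exact hBz B h2 h1 j hj i
        · exact congrFun (congrArg Prod.snd hj') i
      · intro j' hj'
        have hj'' : colp A' C' j' = (0,0) := not_not.mp hj'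
        refine Prod.ext (funext fun i => ?_) (funext fun i => ?_)
        · exact dif_neg hj'
        · exact congrFun (congrArg Prod.snd hj'') i
  have hinj : Function.Injective Φ := by
    rintro ⟨B₁, h₁2, h₁1⟩ ⟨B₂, h₂2, h₂1⟩ hEq
    apply Subtype.ext
    funext i
    apply Subtype.ext
    funext j
    by_cases hj : P j
    · have h' := congrFun (congrArg Subtype.val (congrFun (congrArg Subtype.val hEq) i))
        (e ⟨j, hj⟩).1
      have e1 : bcol B₁ (e ⟨j, hj⟩).1 i = bcol B₂ (e ⟨j, hj⟩).1 i := h'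
      rw [hbcol_e B₁ ⟨j, hj⟩ i, hbcol_e B₂ ⟨j, hj⟩ i] at e1
      exact e1
    · rw [hBz B₁ h₁2 h₁1 j hj i, hBz B₂ h₂2 h₂1 j hj i]
  exact Nat.card_le_card_of_injective Φ hinj

/-- For balanced multiset partitions `m₁, m₂` (of rank at most `n`), every `m` occurring
with nonzero structure constant `α_m` in `T_{m₁} ∘ T_{m₂}` is balanced; and for balanced
`m₁, m₂, m` the structure constant
`α_m = |{B ∈ M(n,λ) : E(A,B) = m₂ ∧ E(B,C) = m₁}|` (for any `A,C` with `E(A,C) = m`)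
is independent of `n`. -/
theorem stmt12 {s : ℕ} (lam : Fin s → ℕ)
    (m1 m2 : Multiset ((Fin s → ℕ) × (Fin s → ℕ)))
    (hm1 : IsMSPlam lam m1) (hb1 : BalancedM m1)
    (hm2 : IsMSPlam lam m2) (hb2 : BalancedM m2) :
    (∀ n : ℕ, 0 < n → Multiset.card m1 ≤ n → Multiset.card m2 ≤ n →
      ∀ A C : Mlam n lam,
        (∃ B : Mlam n lam, Elam A B = m2 ∧ Elam B C = m1) → BalancedM (Elam A C)) ∧
    (∀ m : Multiset ((Fin s → ℕ) × (Fin s → ℕ)), IsMSPlam lam m → BalancedM m →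
      ∀ n n' : ℕ, 0 < n → 0 < n' →
        Multiset.card m1 ≤ n → Multiset.card m2 ≤ n →
        Multiset.card m1 ≤ n' → Multiset.card m2 ≤ n' →
        ∀ (A C : Mlam n lam) (A' C' : Mlam n' lam),
          Elam A C = m → Elam A' C' = m →
          Nat.card {B : Mlam n lam // Elam A B = m2 ∧ Elam B C = m1} =
            Nat.card {B : Mlam n' lam // Elam A' B = m2 ∧ Elam B C' = m1}) := by
  constructor
  · rintro n hn h1n h2n A C ⟨B, hB2, hB1⟩
    have hAB := colsum_eq A B (by rw [hB2]; exact hb2)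
    have hBC := colsum_eq B C (by rw [hB1]; exact hb1)
    intro p hp
    rw [elam_eq', Multiset.mem_filter, Multiset.mem_map] at hp
    obtain ⟨⟨j, _, rfl⟩, _⟩ := hp
    exact (hAB j).trans (hBC j)
  · intro m hm hbm n n' hn hn' h1n h2n h1n' h2n' A C A' C' hAC hA'C'
    exact le_antisymm
      (card_le_aux m1 m2 hb1 hb2 A C A' C' (by rw [hAC, hA'C']))
      (card_le_aux m1 m2 hb1 hb2 A' C' A C (by rw [hAC, hA'C']))
end
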